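/- arXiv:2311.01115 — 2 statements merged into one kernel-verified Lean document; each statement's English description precedes it below -/
import Mathlib

section
/- Let c and c' be generic linear lists on the same items, with c_1 < c_2 and c_{m−1} > c_m for both, that agree except at a single item, and let p and q be neighboring interior items such that in c: p is a local minimum, q is a local maximum, p and q are contiguous in c, and the Condition-II path of the leaf p in T(c) ends at q; and such that in c' both p and q are non-critical. Then in T(c) the node q is the parent of the leaf p and the path of p is the single edge (p,q), and T(c') is obtained from T(c) by deleting the leaf p and suppressing q (attaching q's other child to q's parent), with the induced Condition-II path decomposition. -/
/-- A full binary tree with nodes labeled by `α`. -/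
inductive FullBinTree (α : Type) : Type
  | leaf : α → FullBinTree α
  | node : FullBinTree α → α → FullBinTree α → FullBinTree α
  deriving DecidableEq

namespace FullBinTree

variable {α : Type}

/-- The in-order traversal of the tree. -/
def inorder : FullBinTree α → List α
  | leaf x => [x]
  | node l x r => inorder l ++ [x] ++ inorder r

def rootLabel : FullBinTree α → α
  | leaf x => x
  | node _ x _ => x

def leafList : FullBinTree α → List α
  | leaf x => [x]
  | node l _ r => leafList l ++ leafList r

def internalList : FullBinTree α → List α
  | leaf _ => []
  | node l x r => internalList l ++ [x] ++ internalList r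

/-- Condition I.2: values strictly increase along every edge from child to parent. -/
def ValOrdered (v : α → ℝ) : FullBinTree α → Prop
  | leaf _ => True
  | node l x r => v (rootLabel l) < v x ∧ v (rootLabel r) < v x ∧ ValOrdered v l ∧ ValOrdered v r

/-- `Sub s t` means `s` is a subtree of `t`. -/
inductive Sub : FullBinTree α → FullBinTree α → Prop
  | refl (t : FullBinTree α) : Sub t t
  | left {s l r : FullBinTree α} (x : α) : Sub s l → Sub s (node l x r)
  | right {s l r : FullBinTree α} (x : α) : Sub s r → Sub s (node l x r)

def IsParentOf (t : FullBinTree α) (p c : α) : Prop :=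
  ∃ l r, Sub (node l p r) t ∧ (rootLabel l = c ∨ rootLabel r = c)

def IsLeftChildOf (t : FullBinTree α) (p c : α) : Prop :=
  ∃ l r, Sub (node l p r) t ∧ rootLabel l = c

def IsRightChildOf (t : FullBinTree α) (p c : α) : Prop :=
  ∃ l r, Sub (node l p r) t ∧ rootLabel r = c

/-- Relabel the nodes of the tree. -/
def mapNodes {β : Type} (σ : α → β) : FullBinTree α → FullBinTree β
  | leaf x => leaf (σ x)
  | node l x r => node (mapNodes σ l) (σ x) (mapNodes σ r)

variable [DecidableEq α]

/-- The list of nodes on the path from the root down to `x` (for `x` a node of the tree). -/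
def pathTo : FullBinTree α → α → List α
  | leaf y, _ => [y]
  | node l y r, x =>
    if x = y then [y]
    else if x ∈ inorder l then y :: pathTo l x
    else y :: pathTo r x

/-- The subtree rooted at the node `x`. -/
def subtreeAt : FullBinTree α → α → FullBinTree α
  | leaf y, _ => leaf y
  | node l y r, x =>
    if x = y then node l y r
    else if x ∈ inorder l then subtreeAt l x
    else subtreeAt r x

/-- Condition II: the upper end `b(a)` of the path of the leaf `a`, i.e. the nearest
ancestor of `a` in whose subtree `a` does not have the smallest value; the result
`none` encodes the special root. -/
noncomputable def bOf (t : FullBinTree α) (v : α → ℝ) (a : α) : Option α :=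
  (((pathTo t a).dropLast).reverse).find?
    (fun b => (inorder (subtreeAt t b)).any (fun u => decide (v u < v a)))

/-- The edges `(child, parent)` of the Condition-II path of the leaf `a` in the
augmented tree; the parent `none` encodes the special root. -/
noncomputable def pathEdges (t : FullBinTree α) (v : α → ℝ) (a : α) : List (α × Option α) :=
  let rev := ((pathTo t a).dropLast).reverse
  match rev.findIdx?
      (fun b => (inorder (subtreeAt t b)).any (fun u => decide (v u < v a))) with
  | some k => ((a :: rev.take (k+1)).zip (rev.take (k+1))).map (fun cp => (cp.1, some cp.2))
  | none => ((a :: rev).zip rev).map (fun cp => (cp.1, some cp.2))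
      ++ [((a :: rev).getLast (List.cons_ne_nil _ _), none)]

end FullBinTree

open FullBinTree

/-- The piecewise linear map determined by the list `c` (on the domain `[1,m]`). -/
noncomputable def plMap (c : ℕ → ℝ) (x : ℝ) : ℝ :=
  c (Int.floor x).toNat +
    (x - (Int.floor x : ℝ)) * (c ((Int.floor x).toNat + 1) - c (Int.floor x).toNat)

/-- The set of points of the domain `[1,m]` with values in `[A,B]`. -/
def levelBand (m : ℕ) (c : ℕ → ℝ) (A B : ℝ) : Set ℝ :=
  {x : ℝ | x ∈ Set.Icc (1 : ℝ) (m : ℝ) ∧ plMap c x ∈ Set.Icc A B}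

/-- The sublevel set of the map at `s`, within the domain `[1,m]`. -/
def sublevel (m : ℕ) (c : ℕ → ℝ) (s : ℝ) : Set ℝ :=
  {x : ℝ | x ∈ Set.Icc (1 : ℝ) (m : ℝ) ∧ plMap c x ≤ s}

/-- The support of the frame spanned by the items `a` and `b`: the connected component
of `f⁻¹([f a, f b])` (within the domain) containing `a`. -/
def frameSupport (m : ℕ) (c : ℕ → ℝ) (a b : ℕ) : Set ℝ :=
  connectedComponentIn (levelBand m c (c a) (c b)) (a : ℝ)

/-- `W(a,b)` is a triple-panel window of the piecewise linear map of `c`: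
`a` and `b` are items with `c a < c b` lying in a common connected component `[x,y]`
of `f⁻¹([c a, c b])`, and the value at the end of the support away from the mirror
equals `c a`. -/
def IsTPW (m : ℕ) (c : ℕ → ℝ) (a b : ℕ) : Prop :=
  1 ≤ a ∧ a ≤ m ∧ 1 ≤ b ∧ b ≤ m ∧ c a < c b ∧
  (b : ℝ) ∈ frameSupport m c a b ∧
  (if a < b then plMap c (sSup (frameSupport m c a b)) = c a
   else plMap c (sInf (frameSupport m c a b)) = c a)

/-- `i` is an interior local minimum of the list `c`. -/
def IsLocMin (m : ℕ) (c : ℕ → ℝ) (i : ℕ) : Prop :=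
  1 < i ∧ i < m ∧ c i < c (i - 1) ∧ c i < c (i + 1)

/-- `i` is an interior local maximum of the list `c`. -/
def IsLocMax (m : ℕ) (c : ℕ → ℝ) (i : ℕ) : Prop :=
  1 < i ∧ i < m ∧ c (i - 1) < c i ∧ c (i + 1) < c i

/-- `i` is a critical item that is a leaf: an endpoint or an interior local minimum. -/
def IsCritLeaf (m : ℕ) (c : ℕ → ℝ) (i : ℕ) : Prop :=
  i = 1 ∨ i = m ∨ IsLocMin m c i

/-- `i` is a critical item of the list `c`. -/
def IsCritItem (m : ℕ) (c : ℕ → ℝ) (i : ℕ) : Prop :=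
  IsCritLeaf m c i ∨ IsLocMax m c i

/-- `t` is the tree `T(c)`: a full binary tree on the critical items of `c`
satisfying Condition I.1 (the in-order traversal lists the critical items in
increasing order of position) and Condition I.2 (values increase from child to
parent). -/
def IsTreeOf (m : ℕ) (c : ℕ → ℝ) (t : FullBinTree ℕ) : Prop :=
  List.Chain' (· < ·) (FullBinTree.inorder t) ∧
  (∀ i, i ∈ FullBinTree.inorder t ↔ IsCritItem m c i) ∧
  FullBinTree.ValOrdered c t

/-- Items `p` and `q` are contiguous in the value assignment `w`: no other item has
its value in the closed interval between `w p` and `w q`. -/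
def Contig (m : ℕ) (w : ℕ → ℝ) (p q : ℕ) : Prop :=
  ∀ u, 1 ≤ u → u ≤ m → u ≠ p → u ≠ q →
    w u ∉ Set.Icc (min (w p) (w q)) (max (w p) (w q))

/-- Delete the leaf `p` and suppress its parent `q` (attach the other child of `q`
to the parent of `q`). -/
def removeCancel {α : Type} [DecidableEq α] (p q : α) : FullBinTree α → FullBinTree α
  | .leaf x => .leaf x
  | .node l x r =>
      if x = q then (if FullBinTree.rootLabel l = p then r else l)
      else .node (removeCancel p q l) x (removeCancel p q r)


namespace FullBinTree
set_option linter.unusedSectionVars false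

variable {α : Type}

theorem inorder_ne_nil (t : FullBinTree α) : inorder t ≠ [] := by
  cases t <;> simp [inorder]

theorem rootLabel_mem (t : FullBinTree α) : rootLabel t ∈ inorder t := by
  cases t <;> simp [inorder, rootLabel]

theorem Sub.trans {s u t : FullBinTree α} (h1 : Sub s u) (h2 : Sub u t) : Sub s t := by
  induction h2 with
  | refl => exact h1
  | left x h ih => exact .left x ih
  | right x h ih => exact .right x ih

theorem Sub.inorder_infix {s t : FullBinTree α} (h : Sub s t) :
    inorder s <:+: inorder t := by
  induction h with
  | refl => exact List.infix_refl _
  | @left l r x h ih => exact ih.trans ⟨[], [x] ++ inorder r, by simp [inorder]⟩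
  | @right l r x h ih => exact ih.trans ⟨inorder l ++ [x], [], by simp [inorder]⟩

theorem Sub.subset {s t : FullBinTree α} (h : Sub s t) :
    ∀ a ∈ inorder s, a ∈ inorder t := fun _ ha => h.inorder_infix.subset ha

theorem valOrdered_sub {v : α → ℝ} {s t : FullBinTree α} (h : Sub s t)
    (hv : ValOrdered v t) : ValOrdered v s := by
  induction h with
  | refl => exact hv
  | left x h ih => exact ih hv.2.2.1
  | right x h ih => exact ih hv.2.2.2

theorem le_root {v : α → ℝ} : ∀ {t : FullBinTree α}, ValOrdered v t →
    ∀ u ∈ inorder t, v u ≤ v (rootLabel t)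
  | leaf x, _, u, hu => by simp [inorder] at hu; simp [hu, rootLabel]
  | node l x r, hv, u, hu => by
    simp only [inorder, List.mem_append, List.mem_singleton] at hu
    rcases hu with (h | h) | h
    · exact (le_root hv.2.2.1 u h).trans hv.1.le
    · simp [h, rootLabel]
    · exact (le_root hv.2.2.2 u h).trans hv.2.1.le

theorem nodup_node {l r : FullBinTree α} {x : α}
    (h : (inorder (node l x r)).Nodup) :
    (inorder l).Nodup ∧ (inorder r).Nodup ∧ x ∉ inorder l ∧ x ∉ inorder r ∧
      ∀ a ∈ inorder l, a ∉ inorder r := by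
  have h : ((inorder l ++ [x]) ++ inorder r).Nodup := h
  rw [List.nodup_append', List.nodup_append'] at h
  refine ⟨h.1.1, h.2.1, fun hx => h.1.2.2 hx (by simp), fun hx => h.2.2 (by simp) hx,
    fun a ha hr => h.2.2 (by simp [ha]) hr⟩

end FullBinTree
namespace FullBinTree
set_option linter.unusedSectionVars false

variable {α : Type} [DecidableEq α]

theorem pathTo_leaf (y a : α) : pathTo (leaf y) a = [y] := rfl

theorem pathTo_node (l r : FullBinTree α) (y a : α) :
    pathTo (node l y r) a =
      if a = y then [y]
      else if a ∈ inorder l then y :: pathTo l a else y :: pathTo r a := rfl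

theorem subtreeAt_leaf (y a : α) : subtreeAt (leaf y) a = leaf y := rfl

theorem subtreeAt_node (l r : FullBinTree α) (y a : α) :
    subtreeAt (node l y r) a =
      if a = y then node l y r
      else if a ∈ inorder l then subtreeAt l a else subtreeAt r a := rfl

theorem pathTo_ne_nil (t : FullBinTree α) (a : α) : pathTo t a ≠ [] := by
  cases t with
  | leaf y => simp [pathTo_leaf]
  | node l y r =>
    rw [pathTo_node]
    split <;> [skip; split] <;> simp

theorem pathTo_subset {t : FullBinTree α} {a : α} :
    ∀ b ∈ pathTo t a, b ∈ inorder t := by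
  induction t with
  | leaf y => simp [pathTo_leaf, inorder]
  | node l y r ihl ihr =>
    intro b hb
    rw [pathTo_node] at hb
    simp only [inorder, List.mem_append, List.mem_singleton]
    split at hb
    · simp at hb; tauto
    · split at hb <;> rcases List.mem_cons.mp hb with h | h
      · tauto
      · exact Or.inl (Or.inl (ihl _ h))
      · tauto
      · exact Or.inr (ihr _ h)

theorem mem_inorder_node {l r : FullBinTree α} {y a : α} (h : a ∈ inorder (node l y r)) :
    a ∈ inorder l ∨ a = y ∨ a ∈ inorder r := by
  simpa only [inorder, List.mem_append, List.mem_singleton, or_assoc] using h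

theorem pathTo_eq_append {t : FullBinTree α} {a : α} (h : a ∈ inorder t) :
    ∃ L, pathTo t a = L ++ [a] := by
  induction t with
  | leaf y =>
    simp only [inorder, List.mem_singleton] at h
    exact ⟨[], by simp [pathTo_leaf, h]⟩
  | node l y r ihl ihr =>
    rw [pathTo_node]
    by_cases hy : a = y
    · exact ⟨[], by simp [hy]⟩
    · rcases mem_inorder_node h with hl | hy' | hr
      · obtain ⟨L, hL⟩ := ihl hl
        exact ⟨y :: L, by simp [hy, hl, hL]⟩
      · exact absurd hy' hy
      · by_cases hl : a ∈ inorder l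
        · obtain ⟨L, hL⟩ := ihl hl
          exact ⟨y :: L, by simp [hy, hl, hL]⟩
        · obtain ⟨L, hL⟩ := ihr hr
          exact ⟨y :: L, by simp [hy, hl, hL]⟩

theorem pathTo_nodup {t : FullBinTree α} (hn : (inorder t).Nodup) (a : α) :
    (pathTo t a).Nodup := by
  induction t with
  | leaf y => simp [pathTo_leaf]
  | node l y r ihl ihr =>
    obtain ⟨h1, h2, h3, h4, h5⟩ := nodup_node hn
    rw [pathTo_node]
    split
    · simp
    · split
      · exact List.nodup_cons.mpr ⟨fun hm => h3 (pathTo_subset _ hm), ihl h1⟩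
      · exact List.nodup_cons.mpr ⟨fun hm => h4 (pathTo_subset _ hm), ihr h2⟩

theorem pathTo_cons_root (t : FullBinTree α) (a : α) :
    ∃ tl, pathTo t a = rootLabel t :: tl := by
  cases t with
  | leaf y => exact ⟨[], rfl⟩
  | node l y r =>
    rw [pathTo_node]
    split
    · exact ⟨[], rfl⟩
    · split
      · exact ⟨_, rfl⟩
      · exact ⟨_, rfl⟩

theorem subtreeAt_rootLabel {t : FullBinTree α} {a : α} (h : a ∈ inorder t) :
    rootLabel (subtreeAt t a) = a := by
  induction t with
  | leaf y =>
    simp only [inorder, List.mem_singleton] at h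
    simp [subtreeAt_leaf, rootLabel, h]
  | node l y r ihl ihr =>
    rw [subtreeAt_node]
    by_cases hy : a = y
    · simp [hy, rootLabel]
    · rcases mem_inorder_node h with hl | hy' | hr
      · simp [hy, hl, ihl hl]
      · exact absurd hy' hy
      · by_cases hl : a ∈ inorder l
        · simp [hy, hl, ihl hl]
        · simp [hy, hl, ihr hr]

theorem sub_subtreeAt {t : FullBinTree α} {a : α} (h : a ∈ inorder t) :
    Sub (subtreeAt t a) t := by
  induction t with
  | leaf y => exact .refl _
  | node l y r ihl ihr =>
    rw [subtreeAt_node]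
    by_cases hy : a = y
    · simp only [hy, if_pos rfl]; exact .refl _
    · rcases mem_inorder_node h with hl | hy' | hr
      · simp only [hy, if_neg hy, if_pos hl]; exact .left _ (ihl hl)
      · exact absurd hy' hy
      · by_cases hl : a ∈ inorder l
        · simp only [if_neg hy, if_pos hl]; exact .left _ (ihl hl)
        · simp only [if_neg hy, if_neg hl]; exact .right _ (ihr hr)

theorem mem_subtreeAt_of_mem_pathTo {t : FullBinTree α} {a b : α}
    (hn : (inorder t).Nodup) (ha : a ∈ inorder t) (hb : b ∈ pathTo t a) :
    a ∈ inorder (subtreeAt t b) := by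
  induction t with
  | leaf y =>
    simp only [pathTo_leaf, List.mem_singleton] at hb
    simpa [subtreeAt_leaf, hb] using ha
  | node l y r ihl ihr =>
    obtain ⟨h1, h2, h3, h4, h5⟩ := nodup_node hn
    rw [pathTo_node] at hb
    by_cases hy : a = y
    · rw [if_pos hy] at hb
      simp only [List.mem_singleton] at hb
      rw [subtreeAt_node, hb, if_pos rfl]
      exact ha
    · rw [if_neg hy] at hb
      by_cases hl : a ∈ inorder l
      · rw [if_pos hl] at hb
        rcases List.mem_cons.mp hb with hby | hbl
        · rw [subtreeAt_node, hby, if_pos rfl]; exact ha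
        · have hbl' : b ∈ inorder l := pathTo_subset _ hbl
          have hbny : ¬ b = y := fun h => h3 (h ▸ hbl')
          rw [subtreeAt_node, if_neg hbny, if_pos hbl']
          exact ihl h1 hl hbl
      · rw [if_neg hl] at hb
        have hr : a ∈ inorder r := by
          rcases mem_inorder_node ha with h | h | h
          · exact absurd h hl
          · exact absurd h hy
          · exact h
        rcases List.mem_cons.mp hb with hby | hbr
        · rw [subtreeAt_node, hby, if_pos rfl]; exact ha
        · have hbr' : b ∈ inorder r := pathTo_subset _ hbr
          have hbny : ¬ b = y := fun h => h4 (h ▸ hbr')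
          have hbnl : b ∉ inorder l := fun h => h5 b h hbr'
          rw [subtreeAt_node, if_neg hbny, if_neg hbnl]
          exact ihr h2 hr hbr

theorem subtreeAt_of_sub {s t : FullBinTree α} (h : Sub s t)
    (hn : (inorder t).Nodup) : subtreeAt t (rootLabel s) = s := by
  induction h with
  | refl =>
    cases s with
    | leaf y => rfl
    | node l y r => rw [subtreeAt_node]; simp [rootLabel]
  | @left l r x h ih =>
    obtain ⟨h1, h2, h3, h4, h5⟩ := nodup_node hn
    have hm : rootLabel s ∈ inorder l := h.subset _ (rootLabel_mem s)
    have hne : ¬ rootLabel s = x := fun he => h3 (he ▸ hm)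
    rw [subtreeAt_node, if_neg hne, if_pos hm]
    exact ih h1
  | @right l r x h ih =>
    obtain ⟨h1, h2, h3, h4, h5⟩ := nodup_node hn
    have hm : rootLabel s ∈ inorder r := h.subset _ (rootLabel_mem s)
    have hne : ¬ rootLabel s = x := fun he => h4 (he ▸ hm)
    have hnl : rootLabel s ∉ inorder l := fun he => h5 _ he hm
    rw [subtreeAt_node, if_neg hne, if_neg hnl]
    exact ih h2

end FullBinTree
namespace FullBinTree
set_option linter.unusedSectionVars false

variable {α : Type} [DecidableEq α]

/-- If the root of `n` lies in a subtree `s` of `t`, then `n` is a subtree of `s`. -/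
theorem sub_of_root_mem {n s t : FullBinTree α} (hn : Sub n t) (hs : Sub s t)
    (hnd : (inorder t).Nodup) (hm : rootLabel n ∈ inorder s) : Sub n s := by
  induction hs with
  | refl => exact hn
  | @left l r x h ih =>
    obtain ⟨h1, h2, h3, h4, h5⟩ := nodup_node hnd
    cases hn with
    | refl => exact absurd (h.subset _ hm) h3
    | left _ hn' => exact ih hn' h1
    | right _ hn' =>
      exact absurd (hn'.subset _ (rootLabel_mem n)) (fun hr => h5 _ (h.subset _ hm) hr)
  | @right l r x h ih =>
    obtain ⟨h1, h2, h3, h4, h5⟩ := nodup_node hnd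
    cases hn with
    | refl => exact absurd (h.subset _ hm) h4
    | left _ hn' => exact h5 _ (hn'.subset _ (rootLabel_mem n)) (h.subset _ hm) |>.elim
    | right _ hn' => exact ih hn' h2

/-- Two subtrees sharing an element are nested. -/
theorem sub_chain {t s₁ s₂ : FullBinTree α} (hnd : (inorder t).Nodup)
    (h1 : Sub s₁ t) (h2 : Sub s₂ t) {x : α}
    (hx1 : x ∈ inorder s₁) (hx2 : x ∈ inorder s₂) : Sub s₁ s₂ ∨ Sub s₂ s₁ := by
  induction t with
  | leaf y =>
    cases h1; cases h2; exact Or.inl (.refl _)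
  | node l y r ihl ihr =>
    obtain ⟨hn1, hn2, hn3, hn4, hn5⟩ := nodup_node hnd
    cases h1 with
    | refl => exact Or.inr h2
    | left _ h1' =>
      cases h2 with
      | refl => exact Or.inl (.left _ h1')
      | left _ h2' => exact ihl hn1 h1' h2'
      | right _ h2' => exact (hn5 _ (h1'.subset _ hx1) (h2'.subset _ hx2)).elim
    | right _ h1' =>
      cases h2 with
      | refl => exact Or.inl (.right _ h1')
      | left _ h2' => exact (hn5 _ (h2'.subset _ hx2) (h1'.subset _ hx1)).elim
      | right _ h2' => exact ihr hn2 h1' h2'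

/-- Where can an element occur: as an internal node, the whole tree a leaf, or as a
leaf child of some node. -/
theorem occ_shape {t : FullBinTree α} {p : α} (h : p ∈ inorder t) :
    (∃ L R, Sub (node L p R) t) ∨ t = leaf p ∨
      (∃ x l r, Sub (node l x r) t ∧ (l = leaf p ∨ r = leaf p)) := by
  induction t with
  | leaf y =>
    simp only [inorder, List.mem_singleton] at h
    exact Or.inr (Or.inl (by rw [h]))
  | node l y r ihl ihr =>
    rcases mem_inorder_node h with hl | hy | hr
    · rcases ihl hl with ⟨L, R, hS⟩ | he | ⟨x, l', r', hS, hc⟩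
      · exact Or.inl ⟨L, R, .left _ hS⟩
      · exact Or.inr (Or.inr ⟨y, l, r, .refl _, Or.inl he⟩)
      · exact Or.inr (Or.inr ⟨x, l', r', .left _ hS, hc⟩)
    · exact Or.inl ⟨l, r, hy ▸ .refl _⟩
    · rcases ihr hr with ⟨L, R, hS⟩ | he | ⟨x, l', r', hS, hc⟩
      · exact Or.inl ⟨L, R, .right _ hS⟩
      · exact Or.inr (Or.inr ⟨y, l, r, .refl _, Or.inr he⟩)
      · exact Or.inr (Or.inr ⟨x, l', r', .right _ hS, hc⟩)

theorem count_inorder (t : FullBinTree α) (a : α) :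
    (inorder t).count a = (leafList t).count a + (internalList t).count a := by
  induction t with
  | leaf y => simp [inorder, leafList, internalList]
  | node l y r ihl ihr =>
    simp only [inorder, leafList, internalList, List.count_append, ihl, ihr]
    ring

theorem leafList_subset {t : FullBinTree α} {a : α} (h : a ∈ leafList t) :
    a ∈ inorder t := by
  rw [← List.count_pos_iff] at h ⊢
  rw [count_inorder]; omega

theorem internalList_subset {t : FullBinTree α} {a : α} (h : a ∈ internalList t) :
    a ∈ inorder t := by
  rw [← List.count_pos_iff] at h ⊢
  rw [count_inorder]; omega

theorem mem_internalList_of_sub {t L R : FullBinTree α} {x : α}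
    (h : Sub (node L x R) t) : x ∈ internalList t := by
  induction h with
  | refl => simp [internalList]
  | @left l r y h ih => simp [internalList, ih]
  | @right l r y h ih => simp [internalList, ih]

theorem not_both_leaf_internal {t : FullBinTree α} {a : α}
    (hnd : (inorder t).Nodup) (h1 : a ∈ leafList t) (h2 : a ∈ internalList t) : False := by
  have hc := count_inorder t a
  have hl : 0 < (leafList t).count a := List.count_pos_iff.mpr h1
  have hi : 0 < (internalList t).count a := List.count_pos_iff.mpr h2
  have := List.nodup_iff_count_le_one.mp hnd a
  omega

theorem not_internal_of_leafList {t : FullBinTree α} {a : α}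
    (hnd : (inorder t).Nodup) (h1 : a ∈ leafList t) {L R : FullBinTree α}
    (h : Sub (node L a R) t) : False :=
  not_both_leaf_internal hnd h1 (mem_internalList_of_sub h)

/-- Path decomposition through a subtree. -/
theorem pathTo_decomp {s t : FullBinTree α} (h : Sub s t) (hnd : (inorder t).Nodup)
    {a : α} (ha : a ∈ inorder s) :
    pathTo t a = (pathTo t (rootLabel s)).dropLast ++ pathTo s a := by
  induction h with
  | refl =>
    have : pathTo s (rootLabel s) = [rootLabel s] := by
      cases s with
      | leaf y => rfl
      | node l y r => rw [pathTo_node]; simp [rootLabel]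
    rw [this]; rfl
  | @left l r x h ih =>
    obtain ⟨h1, h2, h3, h4, h5⟩ := nodup_node hnd
    have hm : rootLabel s ∈ inorder l := h.subset _ (rootLabel_mem s)
    have hne : ¬ rootLabel s = x := fun he => h3 (he ▸ hm)
    have hal : a ∈ inorder l := h.subset _ ha
    have hane : ¬ a = x := fun he => h3 (he ▸ hal)
    rw [pathTo_node, if_neg hane, if_pos hal, pathTo_node, if_neg hne, if_pos hm,
      List.dropLast_cons_of_ne_nil (pathTo_ne_nil _ _), ih h1, List.cons_append]
  | @right l r x h ih =>
    obtain ⟨h1, h2, h3, h4, h5⟩ := nodup_node hnd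
    have hm : rootLabel s ∈ inorder r := h.subset _ (rootLabel_mem s)
    have hne : ¬ rootLabel s = x := fun he => h4 (he ▸ hm)
    have hml : rootLabel s ∉ inorder l := fun he => h5 _ he hm
    have har : a ∈ inorder r := h.subset _ ha
    have hane : ¬ a = x := fun he => h4 (he ▸ har)
    have hanl : a ∉ inorder l := fun he => h5 _ he har
    rw [pathTo_node, if_neg hane, if_neg hanl, pathTo_node, if_neg hne, if_neg hml,
      List.dropLast_cons_of_ne_nil (pathTo_ne_nil _ _), ih h2, List.cons_append]

end FullBinTree
namespace FullBinTree
set_option linter.unusedSectionVars false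
set_option linter.unnecessarySeqFocus false

variable {α : Type} [DecidableEq α]

theorem sub_length {s t : FullBinTree α} (h : Sub s t) :
    (inorder s).length ≤ (inorder t).length := h.inorder_infix.sublist.length_le

theorem sub_antisymm {s t : FullBinTree α} (h1 : Sub s t) (h2 : Sub t s) : s = t := by
  cases h1 with
  | refl => rfl
  | @left l r x h =>
    exfalso
    have h3 := (sub_length h2).trans (sub_length h)
    simp only [inorder, List.length_append, List.length_cons, List.length_nil] at h3
    omega
  | @right l r x h =>
    exfalso
    have h3 := (sub_length h2).trans (sub_length h)
    simp only [inorder, List.length_append, List.length_cons, List.length_nil] at h3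
    omega

section RC

variable {p q : α} {R0 qn : FullBinTree α}

theorem rc_node (l r : FullBinTree α) (x : α) :
    removeCancel p q (node l x r) =
      if x = q then (if rootLabel l = p then r else l)
      else node (removeCancel p q l) x (removeCancel p q r) := rfl

theorem rc_eq_self {s : FullBinTree α} (h : q ∉ inorder s) :
    removeCancel p q s = s := by
  induction s with
  | leaf y => rfl
  | node l y r ihl ihr =>
    have hy : ¬ y = q := fun he => h (by simp [inorder, he])
    have hl : q ∉ inorder l := fun hm => h (by simp [inorder, hm])
    have hr : q ∉ inorder r := fun hm => h (by simp [inorder, hm])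
    rw [rc_node, if_neg hy, ihl hl, ihr hr]

theorem rc_inorder_sublist (s : FullBinTree α) :
    List.Sublist (inorder (removeCancel p q s)) (inorder s) := by
  induction s with
  | leaf y => exact List.Sublist.refl _
  | node l y r ihl ihr =>
    rw [rc_node]
    split
    · split
      · exact (List.sublist_append_right _ _).trans (List.Sublist.refl _)
      · exact ((List.sublist_append_left _ _).trans (List.sublist_append_left _ _))
    · exact List.Sublist.append (List.Sublist.append ihl (List.Sublist.refl [y])) ihr

theorem rootLabel_rc {s : FullBinTree α} (h : rootLabel s ≠ q) :
    rootLabel (removeCancel p q s) = rootLabel s := by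
  cases s with
  | leaf y => rfl
  | node l y r => rw [rc_node, if_neg (by simpa [rootLabel] using h)]; rfl

/-- The hypothesis that `qn` is a cancellation node. -/
def IsQn (p q : α) (R0 qn : FullBinTree α) : Prop :=
  qn = node (leaf p) q R0 ∨ qn = node R0 q (leaf p)

theorem IsQn.root (h : IsQn p q R0 qn) : rootLabel qn = q := by
  rcases h with h | h <;> simp [h, rootLabel]

theorem IsQn.subR0 (h : IsQn p q R0 qn) : Sub R0 qn := by
  rcases h with h | h
  · exact h ▸ .right _ (.refl _)
  · exact h ▸ .left _ (.refl _)

theorem IsQn.subLeafP (h : IsQn p q R0 qn) : Sub (leaf p) qn := by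
  rcases h with h | h
  · exact h ▸ .left _ (.refl _)
  · exact h ▸ .right _ (.refl _)

theorem IsQn.p_mem (h : IsQn p q R0 qn) : p ∈ inorder qn :=
  h.subLeafP.subset _ (by simp [inorder])

theorem IsQn.q_mem (h : IsQn p q R0 qn) : q ∈ inorder qn :=
  h.root ▸ rootLabel_mem qn

theorem IsQn.p_not_mem_R0 (h : IsQn p q R0 qn) (hnd : (inorder qn).Nodup) :
    p ∉ inorder R0 := by
  rcases h with h | h <;> subst h <;>
    obtain ⟨h1, h2, h3, h4, h5⟩ := nodup_node hnd
  · exact fun hm => h5 p (by simp [inorder]) hm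
  · exact fun hm => h5 p hm (by simp [inorder])

theorem IsQn.q_not_mem_R0 (h : IsQn p q R0 qn) (hnd : (inorder qn).Nodup) :
    q ∉ inorder R0 := by
  rcases h with h | h <;> subst h <;>
    obtain ⟨h1, h2, h3, h4, h5⟩ := nodup_node hnd
  · exact h4
  · exact h3

theorem IsQn.p_ne_q (h : IsQn p q R0 qn) (hnd : (inorder qn).Nodup) : p ≠ q := by
  rcases h with h | h <;> subst h <;>
    obtain ⟨h1, h2, h3, h4, h5⟩ := nodup_node hnd
  · exact fun he => h3 (by simp [inorder, he])
  · exact fun he => h4 (by simp [inorder, he])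

theorem IsQn.rc_qn (h : IsQn p q R0 qn) (hnd : (inorder qn).Nodup) :
    removeCancel p q qn = R0 := by
  rcases h with h | h <;> subst h
  · simp [rc_node, rootLabel]
  · obtain ⟨h1, h2, h3, h4, h5⟩ := nodup_node hnd
    have : rootLabel R0 ≠ p := by
      intro he
      exact h5 p (he ▸ rootLabel_mem R0) (by simp [inorder])
    rw [rc_node, if_pos rfl, if_neg this]

theorem IsQn.mem_iff (h : IsQn p q R0 qn) {a : α} :
    a ∈ inorder qn ↔ a = p ∨ a = q ∨ a ∈ inorder R0 := by
  rcases h with h | h <;> subst h <;> simp [inorder] <;> tauto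

/-- Uniqueness of the node with root label `q`. -/
theorem IsQn.uniq {t L R : FullBinTree α} (h : IsQn p q R0 qn) (hqt : Sub qn t)
    (hnd : (inorder t).Nodup) (hS : Sub (node L q R) t) : node L q R = qn := by
  have h1 : Sub qn (node L q R) :=
    sub_of_root_mem hqt hS hnd (by rw [h.root]; simp [inorder])
  have h2 : Sub (node L q R) qn := sub_of_root_mem hS hqt hnd h.q_mem
  exact (sub_antisymm h2 h1)

theorem filter_eq_self_of_not_mem {l : List α} (hp : p ∉ l) (hq : q ∉ l) :
    l.filter (fun i => decide (i ≠ p ∧ i ≠ q)) = l :=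
  List.filter_eq_self.mpr fun a ha => by
    simp only [ne_eq, decide_eq_true_eq]
    exact ⟨fun he => hp (he ▸ ha), fun he => hq (he ▸ ha)⟩

theorem IsQn.rc_inorder (h : IsQn p q R0 qn) {s : FullBinTree α} (hq : Sub qn s)
    (hnd : (inorder s).Nodup) :
    inorder (removeCancel p q s) =
      (inorder s).filter (fun i => decide (i ≠ p ∧ i ≠ q)) := by
  induction hq with
  | refl =>
    rw [h.rc_qn hnd]
    rcases h with h' | h' <;> subst h'
    · obtain ⟨h1, h2, h3, h4, h5⟩ := nodup_node hnd
      have hp0 : p ∉ inorder R0 := fun hm => h5 p (by simp [inorder]) hm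
      show inorder R0 = (inorder (leaf p) ++ [q] ++ inorder R0).filter _
      rw [List.filter_append, List.filter_append]
      simp only [inorder]
      rw [filter_eq_self_of_not_mem hp0 h4]
      simp
    · obtain ⟨h1, h2, h3, h4, h5⟩ := nodup_node hnd
      have hp0 : p ∉ inorder R0 := fun hm => h5 p hm (by simp [inorder])
      show inorder R0 = (inorder R0 ++ [q] ++ inorder (leaf p)).filter _
      rw [List.filter_append, List.filter_append]
      simp only [inorder]
      rw [filter_eq_self_of_not_mem hp0 h3]
      simp
  | @left l r x hsub ih =>
    obtain ⟨h1, h2, h3, h4, h5⟩ := nodup_node hnd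
    have hql : q ∈ inorder l := hsub.subset _ h.q_mem
    have hpl : p ∈ inorder l := hsub.subset _ h.p_mem
    have hxq : ¬ x = q := fun he => h3 (he ▸ hql)
    have hxp : ¬ x = p := fun he => h3 (he ▸ hpl)
    have hqr : q ∉ inorder r := fun hm => h5 q hql hm
    have hpr : p ∉ inorder r := fun hm => h5 p hpl hm
    rw [rc_node, if_neg hxq]
    show inorder (removeCancel p q l) ++ [x] ++ inorder (removeCancel p q r) = _
    rw [rc_eq_self hqr, ih h1]
    show _ = (inorder l ++ [x] ++ inorder r).filter _
    rw [List.filter_append, List.filter_append, filter_eq_self_of_not_mem hpr hqr]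
    congr 1
    simp [hxp, hxq]
  | @right l r x hsub ih =>
    obtain ⟨h1, h2, h3, h4, h5⟩ := nodup_node hnd
    have hqr : q ∈ inorder r := hsub.subset _ h.q_mem
    have hpr : p ∈ inorder r := hsub.subset _ h.p_mem
    have hxq : ¬ x = q := fun he => h4 (he ▸ hqr)
    have hxp : ¬ x = p := fun he => h4 (he ▸ hpr)
    have hql : q ∉ inorder l := fun hm => h5 q hm hqr
    have hpl : p ∉ inorder l := fun hm => h5 p hm hpr
    rw [rc_node, if_neg hxq]
    show inorder (removeCancel p q l) ++ [x] ++ inorder (removeCancel p q r) = _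
    rw [rc_eq_self hql, ih h2]
    show _ = (inorder l ++ [x] ++ inorder r).filter _
    rw [List.filter_append, List.filter_append, filter_eq_self_of_not_mem hpl hql]
    congr 1
    simp [hxp, hxq]

theorem rc_sub_of_sub {s t : FullBinTree α} (hst : Sub s t) (hq : q ∈ inorder s)
    (hnd : (inorder t).Nodup) : Sub (removeCancel p q s) (removeCancel p q t) := by
  induction hst with
  | refl => exact .refl _
  | @left l r x hsub ih =>
    obtain ⟨h1, h2, h3, h4, h5⟩ := nodup_node hnd
    have hxq : ¬ x = q := fun he => h3 (he ▸ hsub.subset _ hq)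
    rw [rc_node, if_neg hxq]
    exact .left _ (ih h1)
  | @right l r x hsub ih =>
    obtain ⟨h1, h2, h3, h4, h5⟩ := nodup_node hnd
    have hxq : ¬ x = q := fun he => h4 (he ▸ hsub.subset _ hq)
    rw [rc_node, if_neg hxq]
    exact .right _ (ih h2)

theorem IsQn.sub_rc_of_not_mem (h : IsQn p q R0 qn) {s t : FullBinTree α}
    (hst : Sub s t) (hqt : Sub qn t) (hnd : (inorder t).Nodup)
    (hp : p ∉ inorder s) (hq : q ∉ inorder s) : Sub s (removeCancel p q t) := by
  induction hst with
  | refl => exact absurd (hqt.subset _ h.q_mem) hq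
  | @left l r x hsub ih =>
    obtain ⟨h1, h2, h3, h4, h5⟩ := nodup_node hnd
    by_cases hxq : x = q
    · subst hxq
      have heq : node l x r = qn := h.uniq hqt hnd (.refl _)
      have hrc : removeCancel p x (node l x r) = R0 := by
        rw [heq]; exact h.rc_qn (heq ▸ hnd)
      rw [hrc]
      rcases h with h' | h' <;> rw [h'] at heq <;> injection heq with e1 e2 e3
      · subst e1
        cases hsub
        exact absurd (by simp [inorder]) hp
      · exact e1 ▸ hsub
    · rw [rc_node, if_neg hxq]
      cases hqt with
      | refl => exact absurd h.root hxq
      | left _ hqt' => exact .left _ (ih hqt' h1)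
      | right _ hqt' =>
        have hql : q ∉ inorder l := fun hm => h5 q hm (hqt'.subset _ h.q_mem)
        rw [rc_eq_self hql]
        exact .left _ hsub
  | @right l r x hsub ih =>
    obtain ⟨h1, h2, h3, h4, h5⟩ := nodup_node hnd
    by_cases hxq : x = q
    · subst hxq
      have heq : node l x r = qn := h.uniq hqt hnd (.refl _)
      have hrc : removeCancel p x (node l x r) = R0 := by
        rw [heq]; exact h.rc_qn (heq ▸ hnd)
      rw [hrc]
      rcases h with h' | h' <;> rw [h'] at heq <;> injection heq with e1 e2 e3
      · exact e3 ▸ hsub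
      · subst e3
        cases hsub
        exact absurd (by simp [inorder]) hp
    · rw [rc_node, if_neg hxq]
      cases hqt with
      | refl => exact absurd h.root hxq
      | right _ hqt' => exact .right _ (ih hqt' h2)
      | left _ hqt' =>
        have hqr : q ∉ inorder r := fun hm => h5 q (hqt'.subset _ h.q_mem) hm
        rw [rc_eq_self hqr]
        exact .right _ hsub

theorem IsQn.sub_cases (h : IsQn p q R0 qn) {s : FullBinTree α} (hs : Sub s qn) :
    s = qn ∨ s = leaf p ∨ Sub s R0 := by
  rcases h with h | h <;> subst h
  · cases hs with
    | refl => exact Or.inl rfl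
    | left _ h' => cases h'; exact Or.inr (Or.inl rfl)
    | right _ h' => exact Or.inr (Or.inr h')
  · cases hs with
    | refl => exact Or.inl rfl
    | left _ h' => exact Or.inr (Or.inr h')
    | right _ h' => cases h'; exact Or.inr (Or.inl rfl)

end RC

end FullBinTree
namespace FullBinTree
set_option linter.unusedSectionVars false

variable {α : Type} [DecidableEq α] {p q : α} {R0 qn : FullBinTree α}

theorem filter_ne_eq_self {l : List α} (hq : q ∉ l) :
    l.filter (fun b => decide (b ≠ q)) = l :=
  List.filter_eq_self.mpr fun b hb => by
    simp only [ne_eq, decide_eq_true_eq]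
    exact fun he => hq (he ▸ hb)

theorem IsQn.pathTo_qn_of_mem_R0 (h : IsQn p q R0 qn) {a : α} (ha : a ∈ inorder R0)
    (hnd : (inorder qn).Nodup) (hap : a ≠ p) (haq : a ≠ q) :
    pathTo qn a = q :: pathTo R0 a := by
  rcases h with h' | h' <;> subst h'
  · rw [pathTo_node, if_neg haq, if_neg (by simp [inorder, hap])]
  · rw [pathTo_node, if_neg haq, if_pos ha]

theorem IsQn.pathTo_rc (h : IsQn p q R0 qn) {t : FullBinTree α} (hqt : Sub qn t)
    (hnd : (inorder t).Nodup) {a : α} (ha : a ∈ inorder t) (hap : a ≠ p) (haq : a ≠ q) :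
    pathTo (removeCancel p q t) a = (pathTo t a).filter (fun b => decide (b ≠ q)) := by
  induction hqt with
  | refl =>
    rw [h.rc_qn hnd]
    have haR : a ∈ inorder R0 := by
      rcases h.mem_iff.mp ha with h' | h' | h'
      · exact absurd h' hap
      · exact absurd h' haq
      · exact h'
    rw [h.pathTo_qn_of_mem_R0 haR hnd hap haq]
    have : ∀ b ∈ pathTo R0 a, b ≠ q := fun b hb he =>
      h.q_not_mem_R0 hnd (he ▸ pathTo_subset _ hb)
    rw [List.filter_cons_of_neg (by simp),
      filter_ne_eq_self (fun hm => h.q_not_mem_R0 hnd (pathTo_subset _ hm))]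
  | @left l r x hsub ih =>
    obtain ⟨h1, h2, h3, h4, h5⟩ := nodup_node hnd
    have hql : q ∈ inorder l := hsub.subset _ h.q_mem
    have hpl : p ∈ inorder l := hsub.subset _ h.p_mem
    have hxq : ¬ x = q := fun he => h3 (he ▸ hql)
    have hqr : q ∉ inorder r := fun hm => h5 q hql hm
    rw [rc_node, if_neg hxq]
    by_cases hax : a = x
    · subst hax
      rw [pathTo_node, if_pos rfl, pathTo_node, if_pos rfl,
        List.filter_cons_of_pos (by simpa using hxq), List.filter_nil]
    · rcases mem_inorder_node ha with hal | h' | har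
      · have hmem : a ∈ inorder (removeCancel p q l) := by
          rw [h.rc_inorder hsub h1, List.mem_filter]
          exact ⟨hal, by simp [hap, haq]⟩
        rw [pathTo_node, if_neg hax, if_pos hmem, pathTo_node, if_neg hax, if_pos hal,
          List.filter_cons_of_pos (by simpa using hxq), ih h1 hal]
      · exact absurd h' hax
      · have hanl : a ∉ inorder l := fun hm => h5 a hm har
        have hanl' : a ∉ inorder (removeCancel p q l) := fun hm =>
          hanl ((rc_inorder_sublist l).subset hm)
        rw [pathTo_node, if_neg hax, if_neg hanl', rc_eq_self hqr,
          pathTo_node, if_neg hax, if_neg hanl,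
          List.filter_cons_of_pos (by simpa using hxq),
          filter_ne_eq_self (fun hm => hqr (pathTo_subset _ hm))]
  | @right l r x hsub ih =>
    obtain ⟨h1, h2, h3, h4, h5⟩ := nodup_node hnd
    have hqr : q ∈ inorder r := hsub.subset _ h.q_mem
    have hpr : p ∈ inorder r := hsub.subset _ h.p_mem
    have hxq : ¬ x = q := fun he => h4 (he ▸ hqr)
    have hql : q ∉ inorder l := fun hm => h5 q hm hqr
    rw [rc_node, if_neg hxq, rc_eq_self hql]
    by_cases hax : a = x
    · subst hax
      rw [pathTo_node, if_pos rfl, pathTo_node, if_pos rfl,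
        List.filter_cons_of_pos (by simpa using hxq), List.filter_nil]
    · rcases mem_inorder_node ha with hal | h' | har
      · rw [pathTo_node, if_neg hax, if_pos hal, pathTo_node, if_neg hax, if_pos hal,
          List.filter_cons_of_pos (by simpa using hxq),
          filter_ne_eq_self (fun hm => hql (pathTo_subset _ hm))]
      · exact absurd h' hax
      · have hanl : a ∉ inorder l := fun hm => h5 a hm har
        rw [pathTo_node, if_neg hax, if_neg hanl, pathTo_node, if_neg hax, if_neg hanl,
          List.filter_cons_of_pos (by simpa using hxq), ih h2 har]

theorem valOrdered_rc {v : α → ℝ} {s : FullBinTree α} (hv : ValOrdered v s) :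
    ValOrdered v (removeCancel p q s) ∧
      v (rootLabel (removeCancel p q s)) ≤ v (rootLabel s) := by
  induction s with
  | leaf y => exact ⟨trivial, le_refl _⟩
  | node l y r ihl ihr =>
    obtain ⟨hvl, hrl⟩ := ihl hv.2.2.1
    obtain ⟨hvr, hrr⟩ := ihr hv.2.2.2
    rw [rc_node]
    split
    · split
      · exact ⟨hv.2.2.2, hv.2.1.le⟩
      · exact ⟨hv.2.2.1, hv.1.le⟩
    · exact ⟨⟨lt_of_le_of_lt hrl hv.1, lt_of_le_of_lt hrr hv.2.1, hvl, hvr⟩,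
        by simp [rootLabel]⟩

theorem find?_congr {l : List α} {f g : α → Bool} (h : ∀ b ∈ l, f b = g b) :
    l.find? f = l.find? g := by
  induction l with
  | nil => rfl
  | cons x xs ih =>
    rw [List.find?_cons, List.find?_cons, h x (by simp)]
    split
    · rfl
    · exact ih fun b hb => h b (by simp [hb])

end FullBinTree
theorem inj_ne {m : ℕ} {c : ℕ → ℝ} (hgen : Set.InjOn c (Set.Icc 1 m))
    {i j : ℕ} (hi1 : 1 ≤ i) (him : i ≤ m) (hj1 : 1 ≤ j) (hjm : j ≤ m)
    (hij : i ≠ j) : c i ≠ c j :=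
  fun he => hij (hgen ⟨hi1, him⟩ ⟨hj1, hjm⟩ he)

theorem mono_left (m : ℕ) (c : ℕ → ℝ) (hgen : Set.InjOn c (Set.Icc 1 m))
    {w pp : ℕ} (hw1 : 1 ≤ w) (hwp : w < pp) (hpm : pp ≤ m)
    (hstep : c pp < c (pp - 1))
    (hnc : ∀ i, w < i → i < pp → ¬ IsCritItem m c i) : c pp < c w := by
  have S : ∀ d k, k + 1 + d = pp → w ≤ k → c (k + 1) < c k := by
    intro d
    induction d with
    | zero =>
      intro k hk hw
      have hp : pp = k + 1 := by omega
      subst hp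
      simpa using hstep
    | succ d ih =>
      intro k hk hw
      have h2 : c (k + 2) < c (k + 1) := ih (k + 1) (by omega) (by omega)
      have hnc' := hnc (k + 1) (by omega) (by omega)
      by_contra hcon
      have hne : c k ≠ c (k + 1) :=
        inj_ne hgen (by omega) (by omega) (by omega) (by omega) (by omega)
      have hlt : c k < c (k + 1) := lt_of_le_of_ne (not_lt.mp hcon) hne
      exact hnc' (Or.inr ⟨by omega, by omega, by simpa using hlt, h2⟩)
  have T : ∀ d, 1 ≤ d → w + d ≤ pp → c (w + d) < c w := by
    intro d
    induction d with
    | zero => omega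
    | succ d ih =>
      intro _ hd
      rcases Nat.eq_zero_or_pos d with h0 | h0
      · subst h0
        exact S (pp - (w + 1)) w (by omega) le_rfl
      · exact lt_trans
          (by simpa [Nat.add_assoc] using S (pp - (w + d + 1)) (w + d) (by omega) (by omega))
          (ih h0 (by omega))
  have := T (pp - w) (by omega) (by omega)
  rwa [show w + (pp - w) = pp by omega] at this

theorem mono_right (m : ℕ) (c : ℕ → ℝ) (hgen : Set.InjOn c (Set.Icc 1 m))
    {pp w : ℕ} (hp1 : 1 ≤ pp) (hpw : pp < w) (hwm : w ≤ m)
    (hstep : c pp < c (pp + 1))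
    (hnc : ∀ i, pp < i → i < w → ¬ IsCritItem m c i) : c pp < c w := by
  have S : ∀ k, pp ≤ k → k < w → c k < c (k + 1) := by
    intro k
    induction k with
    | zero => omega
    | succ k ih =>
      intro hk hkw
      rcases Nat.lt_or_ge pp (k + 1) with h0 | h0
      · have h2 : c k < c (k + 1) := ih (by omega) (by omega)
        have hnc' := hnc (k + 1) (by omega) (by omega)
        by_contra hcon
        have hne : c (k + 2) ≠ c (k + 1) :=
          inj_ne hgen (by omega) (by omega) (by omega) (by omega) (by omega)
        have hlt : c (k + 2) < c (k + 1) := lt_of_le_of_ne (not_lt.mp hcon) hne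
        exact hnc' (Or.inr ⟨by omega, by omega, by simpa using h2, hlt⟩)
      · have : pp = k + 1 := by omega
        subst this
        exact hstep
  have T : ∀ d, 1 ≤ d → pp + d ≤ w → c pp < c (pp + d) := by
    intro d
    induction d with
    | zero => omega
    | succ d ih =>
      intro _ hd
      rcases Nat.eq_zero_or_pos d with h0 | h0
      · subst h0
        exact S pp le_rfl (by omega)
      · exact lt_trans (ih h0 (by omega))
          (by simpa [Nat.add_assoc] using S (pp + d) (by omega) (by omega))
  have := T (w - pp) (by omega) (by omega)
  rwa [show pp + (w - pp) = w by omega] at this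
namespace FullBinTree
set_option linter.unusedSectionVars false

variable {α : Type} [DecidableEq α]

theorem any_congr {l : List α} {f g : α → Bool} (h : ∀ b ∈ l, f b = g b) :
    l.any f = l.any g := by
  induction l with
  | nil => rfl
  | cons x xs ih =>
    simp only [List.any_cons, h x (by simp), ih fun b hb => h b (by simp [hb])]

theorem valOrdered_congr {v w : α → ℝ} {s : FullBinTree α}
    (h : ∀ u ∈ inorder s, v u = w u) (hv : ValOrdered v s) : ValOrdered w s := by
  induction s with
  | leaf y => trivial
  | node l y r ihl ihr =>
    have hl : ∀ u ∈ inorder l, v u = w u := fun u hu => h u (by simp [inorder]; tauto)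
    have hr : ∀ u ∈ inorder r, v u = w u := fun u hu => h u (by simp [inorder]; tauto)
    refine ⟨?_, ?_, ihl hl hv.2.2.1, ihr hr hv.2.2.2⟩
    · have e1 : v (rootLabel l) = w (rootLabel l) := hl _ (rootLabel_mem l)
      have e2 : v y = w y := h y (by simp [inorder])
      rw [← e1, ← e2]; exact hv.1
    · have e1 : v (rootLabel r) = w (rootLabel r) := hr _ (rootLabel_mem r)
      have e2 : v y = w y := h y (by simp [inorder])
      rw [← e1, ← e2]; exact hv.2.1

theorem append_singleton_inj {x : α} :
    ∀ {a c b d : List α}, x ∉ a → x ∉ c → a ++ [x] ++ b = c ++ [x] ++ d →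
      a = c ∧ b = d := by
  intro a
  induction a with
  | nil =>
    intro c b d _ hc he
    cases c with
    | nil => simpa using he
    | cons z zs =>
      simp only [List.nil_append, List.cons_append, List.cons.injEq] at he
      exact absurd (he.1 ▸ (List.mem_cons_self : z ∈ z :: zs)) hc
  | cons y ys ih =>
    intro c b d ha hc he
    cases c with
    | nil =>
      simp only [List.nil_append, List.cons_append, List.cons.injEq] at he
      exact absurd (he.1 ▸ (List.mem_cons_self : y ∈ y :: ys)) (he.1 ▸ ha)
    | cons z zs =>
      simp only [List.cons_append, List.cons.injEq] at he
      obtain ⟨h1, h2⟩ := he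
      have := ih (fun hm => ha (List.mem_cons_of_mem _ hm))
        (fun hm => hc (List.mem_cons_of_mem _ hm)) h2
      exact ⟨by rw [h1, this.1], this.2⟩

theorem eq_of_inorder_eq {v : α → ℝ} :
    ∀ (t1 t2 : FullBinTree α), inorder t1 = inorder t2 →
      (inorder t1).Nodup → ValOrdered v t1 → ValOrdered v t2 →
      (∀ x ∈ inorder t1, ∀ y ∈ inorder t1, v x = v y → x = y) → t1 = t2
  | leaf x, leaf y, he, _, _, _, _ => by
    simp only [inorder, List.cons.injEq] at he
    rw [he.1]
  | leaf x, node l y r, he, _, _, _, _ => by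
    exfalso
    have := congrArg List.length he
    simp only [inorder, List.length_append, List.length_cons, List.length_singleton] at this
    have h1 : (inorder l).length ≥ 1 := List.length_pos_iff.mpr (inorder_ne_nil l)
    have h2 : (inorder r).length ≥ 1 := List.length_pos_iff.mpr (inorder_ne_nil r)
    omega
  | node l y r, leaf x, he, _, _, _, _ => by
    exfalso
    have := congrArg List.length he
    simp only [inorder, List.length_append, List.length_cons, List.length_singleton] at this
    have h1 : (inorder l).length ≥ 1 := List.length_pos_iff.mpr (inorder_ne_nil l)
    have h2 : (inorder r).length ≥ 1 := List.length_pos_iff.mpr (inorder_ne_nil r)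
    omega
  | node l1 x r1, node l2 y r2, he, hnd, hv1, hv2, hinj => by
    have hxy : x = y := by
      have hy1 : y ∈ inorder (node l1 x r1) := by
        rw [he]; simp [inorder]
      have hx1 : x ∈ inorder (node l1 x r1) := by simp [inorder]
      have h1 : v y ≤ v x := by
        have := le_root hv1 y hy1
        simpa [rootLabel] using this
      have h2 : v x ≤ v y := by
        have := le_root hv2 x (by rw [← he]; simp [inorder])
        simpa [rootLabel] using this
      exact hinj x hx1 y hy1 (le_antisymm h2 h1)
    subst hxy
    obtain ⟨hn1, hn2, hn3, hn4, hn5⟩ := nodup_node hnd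
    have hnd2 : (inorder (node l2 x r2)).Nodup := he ▸ hnd
    obtain ⟨hm1, hm2, hm3, hm4, hm5⟩ := nodup_node hnd2
    have he' : inorder l1 ++ [x] ++ inorder r1 = inorder l2 ++ [x] ++ inorder r2 := he
    obtain ⟨hel, her⟩ := append_singleton_inj hn3 hm3 he'
    have subl : ∀ u ∈ inorder l1, u ∈ inorder (node l1 x r1) := by
      intro u hu; simp [inorder]; tauto
    have subr : ∀ u ∈ inorder r1, u ∈ inorder (node l1 x r1) := by
      intro u hu; simp [inorder]; tauto
    rw [eq_of_inorder_eq l1 l2 hel hn1 hv1.2.2.1 hv2.2.2.1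
        (fun a ha b hb hab => hinj a (subl a ha) b (subl b hb) hab),
      eq_of_inorder_eq r1 r2 her hn2 hv1.2.2.2 hv2.2.2.2
        (fun a ha b hb hab => hinj a (subr a ha) b (subr b hb) hab)]

theorem adj_not_between [Preorder α] {L : List α} (hch : List.Chain' (· < ·) L)
    {w x z : α} (hinf : [w, x] <:+: L) (hz : z ∈ L) : ¬ (w < z ∧ z < x) := by
  obtain ⟨s1, s2, hL⟩ := hinf
  subst hL
  have hP := List.isChain_iff_pairwise.mp hch
  rw [List.append_assoc, List.pairwise_append] at hP
  obtain ⟨hP1, hP2, hP3⟩ := hP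
  simp only [List.cons_append, List.nil_append] at hP2
  rw [List.pairwise_cons] at hP2
  obtain ⟨hw, hP2'⟩ := hP2
  rw [List.pairwise_cons] at hP2'
  obtain ⟨hx, -⟩ := hP2'
  rintro ⟨hwz, hzx⟩
  rw [List.append_assoc, List.mem_append] at hz
  rcases hz with hz | hz
  · exact absurd (hwz.trans (hP3 z hz w (by simp))) (lt_irrefl w)
  · rcases List.mem_cons.mp hz with rfl | hz
    · exact absurd hwz (lt_irrefl z)
    · rcases List.mem_cons.mp hz with rfl | hz
      · exact absurd hzx (lt_irrefl z)
      · exact absurd (hzx.trans (hx z hz)) (lt_irrefl z)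

end FullBinTree
theorem crit_iff (m : ℕ) (c c' : ℕ → ℝ) {a b : ℕ} (hb : b = a + 1)
    (h1a : 1 < a) (hbm : b < m)
    (hAg : ∀ i, 1 ≤ i → i ≤ m → i ≠ a → i ≠ b → c' i = c i)
    (hac' : ¬ IsCritItem m c' a) (hbc' : ¬ IsCritItem m c' b)
    (hL1 : c' a < c (a - 1) ↔ c a < c (a - 1))
    (hL2 : c (a - 1) < c' a ↔ c (a - 1) < c a)
    (hR1 : c' b < c (b + 1) ↔ c b < c (b + 1))
    (hR2 : c (b + 1) < c' b ↔ c (b + 1) < c b) :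
    ∀ i, IsCritItem m c' i ↔ (IsCritItem m c i ∧ i ≠ a ∧ i ≠ b) := by
  intro i
  by_cases hia : i = a
  · subst hia
    exact iff_of_false hac' (fun h => h.2.1 rfl)
  by_cases hib : i = b
  · subst hib
    exact iff_of_false hbc' (fun h => h.2.2 rfl)
  by_cases hi1 : i = 1
  · subst hi1
    exact iff_of_true (Or.inl (Or.inl rfl)) ⟨Or.inl (Or.inl rfl), hia, hib⟩
  by_cases him : i = m
  · subst him
    exact iff_of_true (Or.inl (Or.inr (Or.inl rfl))) ⟨Or.inl (Or.inr (Or.inl rfl)), hia, hib⟩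
  have unf : ∀ d : ℕ → ℝ, IsCritItem m d i ↔ (IsLocMin m d i ∨ IsLocMax m d i) := by
    intro d
    unfold IsCritItem IsCritLeaf
    tauto
  by_cases hbd : 1 < i ∧ i < m
  · -- interior, not a, b
    have key : (c' i < c' (i - 1) ↔ c i < c (i - 1)) →
        (c' (i - 1) < c' i ↔ c (i - 1) < c i) →
        (c' i < c' (i + 1) ↔ c i < c (i + 1)) →
        (c' (i + 1) < c' i ↔ c (i + 1) < c i) →
        (IsCritItem m c' i ↔ IsCritItem m c i) := by
      intro J1 J2 I1 I2
      rw [unf c', unf c]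
      unfold IsLocMin IsLocMax
      constructor
      · rintro (⟨u1, u2, u3, u4⟩ | ⟨u1, u2, u3, u4⟩)
        · exact Or.inl ⟨u1, u2, J1.mp u3, I1.mp u4⟩
        · exact Or.inr ⟨u1, u2, J2.mp u3, I2.mp u4⟩
      · rintro (⟨u1, u2, u3, u4⟩ | ⟨u1, u2, u3, u4⟩)
        · exact Or.inl ⟨u1, u2, J1.mpr u3, I1.mpr u4⟩
        · exact Or.inr ⟨u1, u2, J2.mpr u3, I2.mpr u4⟩
    have ei : c' i = c i := hAg i (by omega) (by omega) hia hib
    have hiff : IsCritItem m c' i ↔ IsCritItem m c i := by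
      by_cases hip : i + 1 = a
      · -- i = a - 1
        have e0 : c' (i - 1) = c (i - 1) := hAg (i - 1) (by omega) (by omega) (by omega) (by omega)
        have hL1' : c i < c' a ↔ c i < c a := by
          rwa [show a - 1 = i by omega] at hL2
        have hL2' : c' a < c i ↔ c a < c i := by
          rwa [show a - 1 = i by omega] at hL1
        refine key (by rw [ei, e0]) (by rw [ei, e0]) ?_ ?_
        · rw [show i + 1 = a from hip, ei]; exact hL1'
        · rw [show i + 1 = a from hip, ei]; exact hL2'
      · by_cases him1 : i - 1 = b
        · -- i = b + 1
          have e2 : c' (i + 1) = c (i + 1) := hAg (i + 1) (by omega) (by omega) (by omega) (by omega)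
          have hR1' : c i < c' b ↔ c i < c b := by
            rwa [show b + 1 = i by omega] at hR2
          have hR2' : c' b < c i ↔ c b < c i := by
            rwa [show b + 1 = i by omega] at hR1
          refine key ?_ ?_ (by rw [ei, e2]) (by rw [ei, e2])
          · rw [show i - 1 = b from him1, ei]; exact hR1'
          · rw [show i - 1 = b from him1, ei]; exact hR2'
        · have e0 : c' (i - 1) = c (i - 1) :=
            hAg (i - 1) (by omega) (by omega) (by omega) him1
          have e2 : c' (i + 1) = c (i + 1) :=
            hAg (i + 1) (by omega) (by omega) hip (by omega)
          exact key (by rw [ei, e0]) (by rw [ei, e0]) (by rw [ei, e2]) (by rw [ei, e2])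
    rw [hiff]
    exact ⟨fun h => ⟨h, hia, hib⟩, fun h => h.1⟩
  · refine iff_of_false ?_ ?_
    · rw [unf c']
      rintro (⟨u1, u2, -⟩ | ⟨u1, u2, -⟩) <;> exact hbd ⟨u1, u2⟩
    · rintro ⟨hc, -, -⟩
      rw [unf c] at hc
      rcases hc with ⟨u1, u2, -⟩ | ⟨u1, u2, -⟩ <;> exact hbd ⟨u1, u2⟩
open FullBinTree in
/-- **cancellation.** If `p` is a local minimum and `q` a neighboring
local maximum, contiguous in `c`, with the Condition-II path of the leaf `p` in `T(c)`
ending at `q`, and both `p` and `q` are non-critical in `c'`, then in `T(c)` the node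
`q` is the parent of the leaf `p` and the path of `p` is the single edge `(p,q)`;
moreover `T(c')` is obtained from `T(c)` by deleting the leaf `p` and suppressing `q`,
with the induced Condition-II path decomposition. -/
theorem statement10 (m : ℕ) (hm : 2 ≤ m) (c c' : ℕ → ℝ)
    (hgen : Set.InjOn c (Set.Icc 1 m)) (hgen' : Set.InjOn c' (Set.Icc 1 m))
    (h12 : c 1 < c 2) (hlast : c m < c (m - 1))
    (h12' : c' 1 < c' 2) (hlast' : c' m < c' (m - 1))
    (hagree : ∃ j, 1 ≤ j ∧ j ≤ m ∧ c' j ≠ c j ∧ ∀ i, 1 ≤ i → i ≤ m → i ≠ j → c' i = c i)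
    (p q : ℕ) (hnbr : q = p + 1 ∨ p = q + 1)
    (hmin : IsLocMin m c p) (hmax : IsLocMax m c q)
    (hcontig : Contig m c p q)
    (t t' : FullBinTree ℕ) (ht : IsTreeOf m c t) (ht' : IsTreeOf m c' t')
    (hb : FullBinTree.bOf t c p = some q)
    (hpc' : ¬ IsCritItem m c' p) (hqc' : ¬ IsCritItem m c' q) :
    FullBinTree.IsParentOf t q p ∧
    FullBinTree.pathEdges t c p = [(p, some q)] ∧
    t' = removeCancel p q t ∧
    (∀ a ∈ FullBinTree.leafList t, a ≠ p →
      FullBinTree.bOf t' c' a = FullBinTree.bOf t c a) := by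
  classical
  obtain ⟨hch, hmem, hvo⟩ := ht
  obtain ⟨hch', hmem', hvo'⟩ := ht'
  have hnd : (inorder t).Nodup :=
    (List.isChain_iff_pairwise.mp hch).imp (fun h => Nat.ne_of_lt h)
  have hnd' : (inorder t').Nodup :=
    (List.isChain_iff_pairwise.mp hch').imp (fun h => Nat.ne_of_lt h)
  obtain ⟨hp1, hpm, hpd1, hpd2⟩ := hmin
  obtain ⟨hq1, hqm, hqd1, hqd2⟩ := hmax
  have hpq : p ≠ q := by rcases hnbr with h | h <;> omega
  have hcpq : c p < c q := by
    rcases hnbr with h | h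
    · rw [h]; exact hpd2
    · rw [show q = p - 1 by omega]; exact hpd1
  have hpmem : p ∈ inorder t :=
    (hmem p).mpr (Or.inl (Or.inr (Or.inr ⟨hp1, hpm, hpd1, hpd2⟩)))
  have hqmem : q ∈ inorder t := (hmem q).mpr (Or.inr ⟨hq1, hqm, hqd1, hqd2⟩)
  have hcr : ∀ (d : ℕ → ℝ) i, IsCritItem m d i → 1 ≤ i ∧ i ≤ m := by
    rintro d i ((h | h | h) | h)
    · omega
    · omega
    · obtain ⟨u1, u2, -, -⟩ := h; omega
    · obtain ⟨u1, u2, -, -⟩ := h; omega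
  have hrange : ∀ i ∈ inorder t, 1 ≤ i ∧ i ≤ m := fun i hi => hcr c i ((hmem i).mp hi)
  have hcontig' : ∀ u, 1 ≤ u → u ≤ m → u ≠ p → u ≠ q → c u < c p ∨ c q < c u := by
    intro u h1 h2 h3 h4
    have hc := hcontig u h1 h2 h3 h4
    rw [min_eq_left hcpq.le, max_eq_right hcpq.le, Set.mem_Icc] at hc
    rcases lt_or_ge (c u) (c p) with h | h
    · exact Or.inl h
    · rcases le_or_gt (c u) (c q) with h' | h'
      · exact absurd ⟨h, h'⟩ hc
      · exact Or.inr h'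
  have hqpath : q ∈ pathTo t p := by
    have h1 := List.mem_of_find?_eq_some hb
    rw [List.mem_reverse] at h1
    exact List.Sublist.subset (List.dropLast_sublist _) h1
  -- the cancellation node
  obtain ⟨R0, qn, hqn, hqt⟩ : ∃ R0 qn, IsQn p q R0 qn ∧ Sub qn t := by
    rcases occ_shape hpmem with ⟨L, R, hS⟩ | he | ⟨x, l0, r0, hS, hside⟩
    · exfalso
      have hvoP := valOrdered_sub hS hvo
      have hinf := hS.inorder_infix
      set w := (inorder L).getLast (inorder_ne_nil L) with hw
      have hwmem : w ∈ inorder L := List.getLast_mem _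
      have hLsplit : inorder L = (inorder L).dropLast ++ [w] :=
        (List.dropLast_append_getLast (inorder_ne_nil L)).symm
      have hinf2 : [w, p] <:+: inorder t := by
        refine List.IsInfix.trans ⟨(inorder L).dropLast, inorder R, ?_⟩ hinf
        show (inorder L).dropLast ++ [w, p] ++ inorder R
            = inorder L ++ [p] ++ inorder R
        conv_rhs => rw [hLsplit]
        simp
      have hwp : w < p := by
        have hch2 := hch.sublist hinf2.sublist
        exact (List.isChain_cons_cons.mp hch2).1
      have hwt : w ∈ inorder t := hinf2.subset (by simp)
      have hwr := hrange w hwt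
      have hnc : ∀ i, w < i → i < p → ¬ IsCritItem m c i := by
        intro i hi1 hi2 hcrit
        exact adj_not_between hch hinf2 ((hmem i).mpr hcrit) ⟨hi1, hi2⟩
      have h1 : c p < c w := mono_left m c hgen hwr.1 hwp (le_of_lt hpm) hpd1 hnc
      have h2 : c w ≤ c (rootLabel L) := le_root hvoP.2.2.1 w hwmem
      have h3 : c (rootLabel L) < c p := hvoP.1
      linarith
    · exfalso
      rw [he] at hqmem
      simp [inorder] at hqmem
      exact hpq hqmem.symm
    · have hndP : (inorder (node l0 x r0)).Nodup := hnd.sublist hS.inorder_infix.sublist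
      obtain ⟨g1, g2, g3, g4, g5⟩ := nodup_node hndP
      have hxmem : x ∈ inorder t := hS.subset _ (by simp [inorder])
      have hxr := hrange x hxmem
      have hxnp : x ≠ p := by
        rcases hside with h | h
        · intro he; exact g3 (by rw [he, h]; simp [inorder])
        · intro he; exact g4 (by rw [he, h]; simp [inorder])
      have hcpx : c p < c x := by
        rcases hside with h | h
        · subst h
          have hinf2 : [p, x] <:+: inorder t := by
            refine List.IsInfix.trans ⟨[], inorder r0, ?_⟩ hS.inorder_infix
            simp [inorder]
          have hpx : p < x := (List.isChain_cons_cons.mp (hch.sublist hinf2.sublist)).1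
          exact mono_right m c hgen (by omega) hpx hxr.2 hpd2
            (fun i hi1 hi2 hcrit =>
              adj_not_between hch hinf2 ((hmem i).mpr hcrit) ⟨hi1, hi2⟩)
        · subst h
          have hinf2 : [x, p] <:+: inorder t := by
            refine List.IsInfix.trans ⟨inorder l0, [], ?_⟩ hS.inorder_infix
            simp [inorder]
          have hxp : x < p := (List.isChain_cons_cons.mp (hch.sublist hinf2.sublist)).1
          exact mono_left m c hgen hxr.1 hxp (le_of_lt hpm) hpd1
            (fun i hi1 hi2 hcrit =>
              adj_not_between hch hinf2 ((hmem i).mpr hcrit) ⟨hi1, hi2⟩)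
      by_cases hxq : x = q
      · subst hxq
        rcases hside with h | h
        · exact ⟨r0, node l0 x r0, Or.inl (by rw [h]), hS⟩
        · exact ⟨l0, node l0 x r0, Or.inr (by rw [h]), hS⟩
      · exfalso
        obtain ⟨S, hSdef⟩ : ∃ S, subtreeAt t q = S := ⟨_, rfl⟩
        have hsq : Sub S t := hSdef ▸ sub_subtreeAt hqmem
        have hSroot : rootLabel S = q := hSdef ▸ subtreeAt_rootLabel hqmem
        have hpin : p ∈ inorder S :=
          hSdef ▸ mem_subtreeAt_of_mem_pathTo hnd hpmem hqpath
        have hpinP : p ∈ inorder (node l0 x r0) := by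
          rcases hside with h | h <;> simp [h, inorder]
        rcases sub_chain hnd hsq hS hpin hpinP with hc1 | hc2
        · cases hc1 with
          | refl => exact hxq hSroot
          | left _ h' =>
            rcases hside with h | h
            · rw [h] at h'
              cases h'
              exact hpq hSroot
            · exact g5 p (h'.subset _ hpin) (by rw [h]; simp [inorder])
          | right _ h' =>
            rcases hside with h | h
            · exact g5 p (by rw [h]; simp [inorder]) (h'.subset _ hpin)
            · rw [h] at h'
              cases h'
              exact hpq hSroot
        · have hxS : x ∈ inorder S := hc2.subset _ (by simp [inorder])
          have h1 : c x ≤ c q := by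
            have := le_root (valOrdered_sub hsq hvo) x hxS
            rwa [hSroot] at this
          have h2 : c x < c q :=
            lt_of_le_of_ne h1 (inj_ne hgen hxr.1 hxr.2 (by omega) (by omega) hxq)
          rcases hcontig' x hxr.1 hxr.2 hxnp hxq with h | h <;> linarith
  have hndqn : (inorder qn).Nodup := hnd.sublist hqt.inorder_infix.sublist
  have hvoqn := valOrdered_sub hqt hvo
  have hpR0 : p ∉ inorder R0 := hqn.p_not_mem_R0 hndqn
  have hqR0 : q ∉ inorder R0 := hqn.q_not_mem_R0 hndqn
  -- Claim 1
  have claim1 : IsParentOf t q p := by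
    rcases hqn with h | h
    · exact ⟨leaf p, R0, h ▸ hqt, Or.inl rfl⟩
    · exact ⟨R0, leaf p, h ▸ hqt, Or.inr rfl⟩
  -- Claim 2
  have hpathp : pathTo t p = (pathTo t q).dropLast ++ [q, p] := by
    have h1 := pathTo_decomp hqt hnd hqn.p_mem
    rw [hqn.root] at h1
    have h2 : pathTo qn p = [q, p] := by
      rcases hqn with h | h <;> subst h
      · rw [pathTo_node, if_neg hpq, if_pos (by simp [inorder])]
        rfl
      · rw [pathTo_node, if_neg hpq, if_neg hpR0]
        rfl
    rw [h1, h2]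
  obtain ⟨B, hB⟩ := pathTo_eq_append hqmem
  have hdropq : (pathTo t q).dropLast = B := by rw [hB]; simp
  have hqnotB : q ∉ B := by
    have hnp := pathTo_nodup hnd q
    rw [hB] at hnp
    intro hmB
    rcases List.nodup_append'.mp hnp with ⟨-, -, hdis⟩
    exact hdis hmB (by simp)
  have hrev : (pathTo t p).dropLast.reverse = q :: B.reverse := by
    rw [hpathp, hdropq, show B ++ [q, p] = (B ++ [q]) ++ [p] by simp,
      List.dropLast_concat, List.reverse_append]
    simp
  rw [bOf, hrev] at hb
  have hpredq :
      ((inorder (subtreeAt t q)).any fun u => decide (c u < c p)) = true := by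
    by_contra hcon
    rw [List.find?_cons_of_neg
      (p := fun b => (inorder (subtreeAt t b)).any fun u => decide (c u < c p))
      (l := B.reverse) hcon] at hb
    have := List.mem_of_find?_eq_some hb
    rw [List.mem_reverse] at this
    exact hqnotB this
  have claim2 : pathEdges t c p = [(p, some q)] := by
    rw [pathEdges, hrev, List.findIdx?_cons, hpredq]
    simp
  -- Claim 3
  obtain ⟨j, hj1, hjm, hjne, hjag⟩ := hagree
  have hjwp : j = p - 1 ∨ j = p ∨ j = p + 1 := by
    by_contra hcon
    push_neg at hcon
    obtain ⟨w1, w2, w3⟩ := hcon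
    have e1 : c' p = c p := hjag p (by omega) (by omega) (by omega)
    have e0 : c' (p - 1) = c (p - 1) := hjag _ (by omega) (by omega) (by omega)
    have e2 : c' (p + 1) = c (p + 1) := hjag _ (by omega) (by omega) (by omega)
    exact hpc' (Or.inl (Or.inr (Or.inr ⟨hp1, hpm, by rw [e1, e0]; exact hpd1,
      by rw [e1, e2]; exact hpd2⟩)))
  have hjwq : j = q - 1 ∨ j = q ∨ j = q + 1 := by
    by_contra hcon
    push_neg at hcon
    obtain ⟨w1, w2, w3⟩ := hcon
    have e1 : c' q = c q := hjag q (by omega) (by omega) (by omega)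
    have e0 : c' (q - 1) = c (q - 1) := hjag _ (by omega) (by omega) (by omega)
    have e2 : c' (q + 1) = c (q + 1) := hjag _ (by omega) (by omega) (by omega)
    exact hqc' (Or.inr ⟨hq1, hqm, by rw [e1, e0]; exact hqd1, by rw [e1, e2]; exact hqd2⟩)
  have hjpq : j = p ∨ j = q := by
    rcases hnbr with h | h <;> rcases hjwp with h' | h' | h' <;>
      rcases hjwq with h'' | h'' | h'' <;> omega
  have hAg : ∀ i, 1 ≤ i → i ≤ m → i ≠ p → i ≠ q → c' i = c i :=
    fun i h1 h2 h3 h4 => hjag i h1 h2 (by rcases hjpq with h | h <;> omega)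
  have hiff : ∀ i, IsCritItem m c' i ↔ (IsCritItem m c i ∧ i ≠ p ∧ i ≠ q) := by
    rcases hnbr with hor | hor
    · -- q = p + 1
      have hFL : c' p < c (p - 1) := by
        rcases hjpq with hj | hj
        · have eq1 : c' q = c q := hjag q (by omega) (by omega) (by omega)
          have eq2 : c' (q + 1) = c (q + 1) := hjag _ (by omega) (by omega) (by omega)
          have eq3 : c' (p - 1) = c (p - 1) := hjag _ (by omega) (by omega) (by omega)
          have hnm : ¬ IsLocMax m c' q := fun h => hqc' (Or.inr h)
          have step1 : c q < c' p := by
            by_contra hcon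
            push_neg at hcon
            have hne : c' p ≠ c q := by
              rw [← eq1]
              exact inj_ne hgen' (by omega) (by omega) (by omega) (by omega) hpq
            exact hnm ⟨hq1, hqm, by
              rw [show q - 1 = p by omega, eq1]
              exact lt_of_le_of_ne hcon hne, by rw [eq1, eq2]; exact hqd2⟩
          have hnm2 : ¬ IsLocMax m c' p := fun h => hpc' (Or.inr h)
          by_contra hcon
          push_neg at hcon
          have hne : c (p - 1) ≠ c' p := by
            rw [← eq3]
            exact inj_ne hgen' (by omega) (by omega) (by omega) (by omega) (by omega)
          exact hnm2 ⟨hp1, hpm, by rw [eq3]; exact lt_of_le_of_ne hcon hne,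
            by rw [show p + 1 = q by omega, eq1]; exact step1⟩
        · rw [hjag p (by omega) (by omega) (by omega)]
          exact hpd1
      have hFR : c (q + 1) < c' q := by
        rcases hjpq with hj | hj
        · rw [hjag q (by omega) (by omega) (by omega)]
          exact hqd2
        · have eqp : c' p = c p := hjag p (by omega) (by omega) (by omega)
          have eqp1 : c' (p - 1) = c (p - 1) := hjag _ (by omega) (by omega) (by omega)
          have eq2 : c' (q + 1) = c (q + 1) := hjag _ (by omega) (by omega) (by omega)
          have hnm : ¬ IsLocMin m c' p := fun h => hpc' (Or.inl (Or.inr (Or.inr h)))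
          have step1 : c' q < c p := by
            by_contra hcon
            push_neg at hcon
            have hne : c p ≠ c' q := by
              rw [← eqp]
              exact inj_ne hgen' (by omega) (by omega) (by omega) (by omega) hpq
            exact hnm ⟨hp1, hpm, by rw [eqp, eqp1]; exact hpd1,
              by rw [eqp, show p + 1 = q by omega]; exact lt_of_le_of_ne hcon hne⟩
          have hnm2 : ¬ IsLocMin m c' q := fun h => hqc' (Or.inl (Or.inr (Or.inr h)))
          by_contra hcon
          push_neg at hcon
          have hne : c' q ≠ c (q + 1) := by
            rw [← eq2]
            exact inj_ne hgen' (by omega) (by omega) (by omega) (by omega) (by omega)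
          exact hnm2 ⟨hq1, hqm, by rw [show q - 1 = p by omega, eqp]; exact step1,
            by rw [eq2]; exact lt_of_le_of_ne hcon hne⟩
      exact crit_iff m c c' hor hp1 hqm hAg hpc' hqc'
        (iff_of_true hFL hpd1)
        (iff_of_false (lt_asymm hFL) (lt_asymm hpd1))
        (iff_of_false (lt_asymm hFR) (lt_asymm hqd2))
        (iff_of_true hFR hqd2)
    · -- p = q + 1
      have hFL : c (q - 1) < c' q := by
        rcases hjpq with hj | hj
        · have h0 : c (q - 1) < c q := hqd1
          rw [show c q = c' q from (hjag q (by omega) (by omega) (by omega)).symm] at h0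
          exact h0
        · have eqp : c' p = c p := hjag p (by omega) (by omega) (by omega)
          have eqp1 : c' (p + 1) = c (p + 1) := hjag _ (by omega) (by omega) (by omega)
          have eq0 : c' (q - 1) = c (q - 1) := hjag _ (by omega) (by omega) (by omega)
          have hnm : ¬ IsLocMin m c' p := fun h => hpc' (Or.inl (Or.inr (Or.inr h)))
          have step1 : c' q < c p := by
            by_contra hcon
            push_neg at hcon
            have hne : c p ≠ c' q := by
              rw [← eqp]
              exact inj_ne hgen' (by omega) (by omega) (by omega) (by omega) hpq
            exact hnm ⟨hp1, hpm, by
              rw [eqp, show p - 1 = q by omega]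
              exact lt_of_le_of_ne hcon hne, by rw [eqp, eqp1]; exact hpd2⟩
          have hnm2 : ¬ IsLocMin m c' q := fun h => hqc' (Or.inl (Or.inr (Or.inr h)))
          by_contra hcon
          push_neg at hcon
          have hne : c' q ≠ c (q - 1) := by
            rw [← eq0]
            exact inj_ne hgen' (by omega) (by omega) (by omega) (by omega) (by omega)
          exact hnm2 ⟨hq1, hqm, by rw [eq0]; exact lt_of_le_of_ne hcon hne,
            by rw [show q + 1 = p by omega, eqp]; exact step1⟩
      have hFR : c' p < c (p + 1) := by
        rcases hjpq with hj | hj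
        · have eq1 : c' q = c q := hjag q (by omega) (by omega) (by omega)
          have eq0 : c' (q - 1) = c (q - 1) := hjag _ (by omega) (by omega) (by omega)
          have eqp1 : c' (p + 1) = c (p + 1) := hjag _ (by omega) (by omega) (by omega)
          have hnm : ¬ IsLocMax m c' q := fun h => hqc' (Or.inr h)
          have step1 : c q < c' p := by
            by_contra hcon
            push_neg at hcon
            have hne : c' p ≠ c q := by
              rw [← eq1]
              exact inj_ne hgen' (by omega) (by omega) (by omega) (by omega) hpq
            exact hnm ⟨hq1, hqm, by rw [eq1, eq0]; exact hqd1,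
              by rw [eq1, show q + 1 = p by omega]; exact lt_of_le_of_ne hcon hne⟩
          have hnm2 : ¬ IsLocMax m c' p := fun h => hpc' (Or.inr h)
          by_contra hcon
          push_neg at hcon
          have hne : c (p + 1) ≠ c' p := by
            rw [← eqp1]
            exact inj_ne hgen' (by omega) (by omega) (by omega) (by omega) (by omega)
          exact hnm2 ⟨hp1, hpm, by rw [show p - 1 = q by omega, eq1]; exact step1,
            by rw [eqp1]; exact lt_of_le_of_ne hcon hne⟩
        · rw [hjag p (by omega) (by omega) (by omega)]
          exact hpd2
      have base := crit_iff m c c' hor hq1 hpm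
        (fun i h1 h2 h3 h4 => hAg i h1 h2 h4 h3) hqc' hpc'
        (iff_of_false (lt_asymm hFL) (lt_asymm hqd1))
        (iff_of_true hFL hqd1)
        (iff_of_true hFR hpd2)
        (iff_of_false (lt_asymm hFR) (lt_asymm hpd2))
      intro i
      rw [base i]
      tauto
  have hndrc : (inorder (removeCancel p q t)).Nodup := hnd.sublist (rc_inorder_sublist t)
  have hrcin := hqn.rc_inorder hqt hnd
  have hmemrc : ∀ i, i ∈ inorder (removeCancel p q t) ↔ IsCritItem m c' i := by
    intro i
    rw [hrcin, List.mem_filter, hiff i]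
    simp only [ne_eq, decide_eq_true_eq]
    constructor
    · rintro ⟨h1, h2, h3⟩
      exact ⟨(hmem i).mp h1, h2, h3⟩
    · rintro ⟨h1, h2, h3⟩
      exact ⟨(hmem i).mpr h1, h2, h3⟩
  have hvorc : ValOrdered c' (removeCancel p q t) := by
    refine valOrdered_congr ?_ (valOrdered_rc hvo).1
    intro u hu
    have h1 : u ∈ inorder t ∧ u ≠ p ∧ u ≠ q := by
      rw [hrcin, List.mem_filter] at hu
      simpa using hu
    have hur := hrange u h1.1
    exact (hAg u hur.1 hur.2 h1.2.1 h1.2.2).symm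
  haveI : IsAntisymm ℕ (· < ·) := ⟨fun a b h1 h2 => absurd h2 (lt_asymm h1)⟩
  have claim3 : t' = removeCancel p q t := by
    have hperm : inorder t' = inorder (removeCancel p q t) := by
      refine List.Perm.eq_of_pairwise (fun a b _ _ h1 h2 => absurd h2 (lt_asymm h1))
        (List.isChain_iff_pairwise.mp hch')
        (List.isChain_iff_pairwise.mp (hch.sublist (rc_inorder_sublist t)))
        ((List.perm_ext_iff_of_nodup hnd' hndrc).mpr ?_)
      intro i
      rw [hmem' i, hmemrc i]
    refine eq_of_inorder_eq t' (removeCancel p q t) hperm hnd' hvo' hvorc ?_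
    intro x hx y hy hxy
    have h1 := hcr c' x ((hmem' x).mp hx)
    have h2 := hcr c' y ((hmem' y).mp hy)
    exact hgen' ⟨h1.1, h1.2⟩ ⟨h2.1, h2.2⟩ hxy
    -- Claim 4
  refine ⟨claim1, claim2, claim3, ?_⟩
  intro a haleaf hap
  rw [claim3]
  have hamem : a ∈ inorder t := leafList_subset haleaf
  have har := hrange a hamem
  have hqint : q ∈ internalList t := by
    rcases hqn with h | h
    · exact mem_internalList_of_sub (h ▸ hqt)
    · exact mem_internalList_of_sub (h ▸ hqt)
  have haq : a ≠ q := fun he => not_both_leaf_internal hnd haleaf (he ▸ hqint)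
  have hc'a : c' a = c a := hAg a har.1 har.2 hap haq
  have hcaval : ∀ u ∈ inorder t, u ≠ p → u ≠ q → c' u = c u := fun u hu h1 h2 =>
    hAg u (hrange u hu).1 (hrange u hu).2 h1 h2
  have hwit : c (rootLabel R0) < c q := by
    have hv := valOrdered_sub hqt hvo
    rcases hqn with h | h
    · rw [h] at hv
      exact hv.2.1
    · rw [h] at hv
      exact hv.1
  have hw0 : rootLabel R0 ∈ inorder R0 := rootLabel_mem R0
  have hw0p : rootLabel R0 ≠ p := fun he => hpR0 (he ▸ hw0)
  have hw0q : rootLabel R0 ≠ q := fun he => hqR0 (he ▸ hw0)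
  have hw0t : rootLabel R0 ∈ inorder t := (hqn.subR0.trans hqt).subset _ hw0
  have hsubleafp : subtreeAt t p = leaf p := subtreeAt_of_sub (hqn.subLeafP.trans hqt) hnd
  have hpnotpath : ∀ z, z ∈ inorder t → z ≠ p → p ∉ pathTo t z := by
    intro z hz hzp hmem2
    have h1 := mem_subtreeAt_of_mem_pathTo hnd hz hmem2
    rw [hsubleafp] at h1
    simp [inorder] at h1
    exact hzp h1
  have E1 : ∀ b ∈ inorder t, b ≠ p → b ≠ q →
      ((inorder (subtreeAt (removeCancel p q t) b)).any fun u => decide (c' u < c' a)) =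
      ((inorder (subtreeAt t b)).any fun u => decide (c u < c a)) := by
    intro b hbmem hbp hbq
    obtain ⟨s, hsdef⟩ : ∃ s, subtreeAt t b = s := ⟨_, rfl⟩
    have hsub : Sub s t := hsdef ▸ sub_subtreeAt hbmem
    have hsroot : rootLabel s = b := hsdef ▸ subtreeAt_rootLabel hbmem
    have hnds : (inorder s).Nodup := hnd.sublist hsub.inorder_infix.sublist
    rw [hsdef]
    by_cases hqs : q ∈ inorder s
    · have hqns : Sub qn s := sub_of_root_mem hqt hsub hnd (by rw [hqn.root]; exact hqs)
      have hsub' : Sub (removeCancel p q s) (removeCancel p q t) :=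
        rc_sub_of_sub hsub hqs hnd
      have hroot' : rootLabel (removeCancel p q s) = b := by
        rw [rootLabel_rc (by rw [hsroot]; exact hbq), hsroot]
      have hsub'at : subtreeAt (removeCancel p q t) b = removeCancel p q s := by
        rw [← hroot']
        exact subtreeAt_of_sub hsub' hndrc
      rw [hsub'at, hqn.rc_inorder hqns hnds]
      have hiff2 : (∃ u ∈ (inorder s).filter (fun i => decide (i ≠ p ∧ i ≠ q)),
          c' u < c' a) ↔ ∃ u ∈ inorder s, c u < c a := by
        constructor
        · rintro ⟨u, hu, hua⟩
          rw [List.mem_filter] at hu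
          obtain ⟨hu1, hu2⟩ := hu
          simp only [ne_eq, decide_eq_true_eq] at hu2
          refine ⟨u, hu1, ?_⟩
          rw [← hcaval u (hsub.subset _ hu1) hu2.1 hu2.2, ← hc'a]
          exact hua
        · rintro ⟨u, hu, hua⟩
          by_cases hupq : u ≠ p ∧ u ≠ q
          · refine ⟨u, ?_, ?_⟩
            · rw [List.mem_filter]
              exact ⟨hu, by simp [hupq.1, hupq.2]⟩
            · rw [hcaval u (hsub.subset _ hu) hupq.1 hupq.2, hc'a]
              exact hua
          · have hqa : c q < c a := by
              push_neg at hupq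
              by_cases hup : u = p
              · subst hup
                rcases hcontig' a har.1 har.2 hap haq with h | h
                · linarith
                · exact h
              · rw [← hupq hup]
                exact hua
            refine ⟨rootLabel R0, ?_, ?_⟩
            · rw [List.mem_filter]
              exact ⟨(hqn.subR0.trans hqns).subset _ hw0, by simp [hw0p, hw0q]⟩
            · rw [hcaval _ hw0t hw0p hw0q, hc'a]
              linarith
      have h1 : (∃ u ∈ (inorder s).filter (fun i => decide (i ≠ p ∧ i ≠ q)),
          c' u < c' a) ↔
          (((inorder s).filter (fun i => decide (i ≠ p ∧ i ≠ q))).any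
            fun u => decide (c' u < c' a)) = true := by
        simp only [List.any_eq_true, List.mem_filter, decide_eq_true_eq]
        all_goals tauto
      have h2 : (∃ u ∈ inorder s, c u < c a) ↔
          ((inorder s).any fun u => decide (c u < c a)) = true := by
        simp [List.any_eq_true]
      rw [h1, h2] at hiff2
      exact Bool.coe_iff_coe.mp hiff2
    · have hps : p ∉ inorder s := by
        intro hps
        rcases sub_chain hnd hsub hqt hps hqn.p_mem with h1 | h2
        · rcases hqn.sub_cases h1 with he | he | hsubR
          · exact hqs (he ▸ hqn.q_mem)
          · rw [he] at hsroot
            exact hbp hsroot.symm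
          · exact hpR0 (hsubR.subset _ hps)
        · exact hqs (h2.subset _ hqn.q_mem)
      have hsub' : Sub s (removeCancel p q t) :=
        hqn.sub_rc_of_not_mem hsub hqt hnd hps hqs
      have hs'at : subtreeAt (removeCancel p q t) b = s := by
        rw [← hsroot]
        exact subtreeAt_of_sub hsub' hndrc
      rw [hs'at]
      apply any_congr
      intro u hu
      rw [hcaval u (hsub.subset _ hu) (fun he => hps (he ▸ hu))
        (fun he => hqs (he ▸ hu)), hc'a]
  rw [bOf, bOf]
  by_cases hqpa : q ∈ pathTo t a
  · have hsqt : subtreeAt t q = qn := by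
      rw [← hqn.root]
      exact subtreeAt_of_sub hqt hnd
    have haqn : a ∈ inorder qn := by
      have h1 := mem_subtreeAt_of_mem_pathTo hnd hamem hqpa
      rwa [hsqt] at h1
    have haR0 : a ∈ inorder R0 := by
      rcases hqn.mem_iff.mp haqn with h | h | h
      · exact absurd h hap
      · exact absurd h haq
      · exact h
    have hdec : pathTo t a = (pathTo t q).dropLast ++ (q :: pathTo R0 a) := by
      have h1 := pathTo_decomp hqt hnd haqn
      rw [hqn.root] at h1
      rw [h1, hqn.pathTo_qn_of_mem_R0 haR0 hndqn hap haq]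
    obtain ⟨P1, hP1⟩ := pathTo_eq_append haR0
    have hdl : (pathTo t a).dropLast = B ++ (q :: P1) := by
      rw [hdec, hdropq, hP1,
        show B ++ (q :: (P1 ++ [a])) = (B ++ q :: P1) ++ [a] by simp,
        List.dropLast_concat]
    have hrevA : (pathTo t a).dropLast.reverse = P1.reverse ++ [q] ++ B.reverse := by
      rw [hdl]; simp
    have hqnotP : q ∉ pathTo R0 a := fun hm => hqR0 (pathTo_subset _ hm)
    have hfil : pathTo (removeCancel p q t) a = B ++ pathTo R0 a := by
      rw [hqn.pathTo_rc hqt hnd hamem hap haq, hdec, hdropq, List.filter_append,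
        filter_ne_eq_self hqnotB, List.filter_cons_of_neg (by simp),
        filter_ne_eq_self hqnotP]
    have hdl' : (pathTo (removeCancel p q t) a).dropLast = B ++ P1 := by
      rw [hfil, hP1, show B ++ (P1 ++ [a]) = (B ++ P1) ++ [a] by simp,
        List.dropLast_concat]
    have hrevB : (pathTo (removeCancel p q t) a).dropLast.reverse
        = P1.reverse ++ B.reverse := by
      rw [hdl']; simp
    rw [hrevA, hrevB]
    have hDmem : ∀ b ∈ P1.reverse, b ∈ inorder R0 := by
      intro b hbm
      rw [List.mem_reverse] at hbm
      exact pathTo_subset _ (by rw [hP1]; exact List.mem_append_left _ hbm)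
    have hfind1 : List.find? (fun b => (inorder (subtreeAt (removeCancel p q t) b)).any
          fun u => decide (c' u < c' a)) P1.reverse
        = List.find? (fun b => (inorder (subtreeAt t b)).any
          fun u => decide (c u < c a)) P1.reverse := by
      apply find?_congr
      intro b hbm
      have h1 := hDmem b hbm
      exact E1 b ((hqn.subR0.trans hqt).subset _ h1)
        (fun he => hpR0 (he ▸ h1)) (fun he => hqR0 (he ▸ h1))
    have hfind2 : List.find? (fun b => (inorder (subtreeAt (removeCancel p q t) b)).any
          fun u => decide (c' u < c' a)) B.reverse
        = List.find? (fun b => (inorder (subtreeAt t b)).any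
          fun u => decide (c u < c a)) B.reverse := by
      apply find?_congr
      intro b hbm
      rw [List.mem_reverse] at hbm
      have h1 : b ∈ pathTo t q := by
        rw [hB]; exact List.mem_append_left _ hbm
      exact E1 b (pathTo_subset _ h1)
        (fun he => hpnotpath q hqmem (Ne.symm hpq) (by rw [← he]; exact h1))
        (fun he => hqnotB (by rw [← he]; exact hbm))
    rw [List.find?_append, List.find?_append, List.find?_append, hfind1, hfind2]
    cases hcase : List.find? (fun b => (inorder (subtreeAt t b)).any
        fun u => decide (c u < c a)) P1.reverse with
    | some x => simp
    | none =>
      simp only [Option.none_or]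
      have hR0all : ∀ u ∈ inorder R0, ¬ c u < c a := by
        have hnone := List.find?_eq_none.mp hcase
        obtain ⟨tl, htl⟩ := pathTo_cons_root R0 a
        cases P1 with
        | nil =>
          have hroota : rootLabel R0 = a := by
            rw [hP1] at htl
            simp at htl
            exact htl.1.symm
          cases hR0 : R0 with
          | leaf y =>
            intro u hu
            rw [hR0] at hroota
            simp only [rootLabel] at hroota
            simp only [inorder, List.mem_singleton] at hu
            rw [hu, hroota]
            exact lt_irrefl _
          | node l1 y r1 =>
            exfalso
            rw [hR0] at hroota
            simp only [rootLabel] at hroota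
            refine not_internal_of_leafList hnd haleaf (L := l1) (R := r1) ?_
            rw [← hroota, ← hR0]
            exact hqn.subR0.trans hqt
        | cons z P1' =>
          have hz : z = rootLabel R0 := by
            rw [hP1] at htl
            simp at htl
            exact htl.1
          have hzmem : z ∈ (z :: P1').reverse := by simp
          have hFz := hnone z hzmem
          have hsubR0 : subtreeAt t z = R0 := by
            rw [hz, ← show rootLabel R0 = rootLabel R0 from rfl]
            rw [show rootLabel R0 = rootLabel R0 from rfl]
            exact subtreeAt_of_sub (hqn.subR0.trans hqt) hnd
          rw [hsubR0] at hFz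
          intro u hu hua
          apply hFz
          rw [List.any_eq_true]
          exact ⟨u, hu, by simp [hua]⟩
      have hcaq : c a < c p := by
        have h1 : c a ≤ c q := by
          have h2 := le_root hvoqn a haqn
          rwa [hqn.root] at h2
        have h2 : c a < c q :=
          lt_of_le_of_ne h1 (inj_ne hgen har.1 har.2 (by omega) (by omega) haq)
        rcases hcontig' a har.1 har.2 hap haq with h | h
        · exact h
        · linarith
      have hFq : ((inorder (subtreeAt t q)).any fun u => decide (c u < c a)) = false := by
        rw [hsqt, List.any_eq_false]
        intro u hu
        simp only [decide_eq_true_eq]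
        rcases hqn.mem_iff.mp hu with h | h | h
        · rw [h]; linarith
        · rw [h]
          intro hcon
          have h1 : c a ≤ c q := by
            have h2 := le_root hvoqn a haqn
            rwa [hqn.root] at h2
          linarith
        · exact hR0all u h
      rw [show List.find? (fun b => (inorder (subtreeAt t b)).any
          fun u => decide (c u < c a)) [q] = none by
        rw [List.find?_cons_of_neg
          (p := fun b => (inorder (subtreeAt t b)).any fun u => decide (c u < c a))
          (l := []) (by simp [hFq]), List.find?_nil]]
      simp
  · have hfil : pathTo (removeCancel p q t) a = pathTo t a := by
      rw [hqn.pathTo_rc hqt hnd hamem hap haq, filter_ne_eq_self hqpa]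
    rw [hfil]
    apply find?_congr
    intro b hbm
    rw [List.mem_reverse] at hbm
    have h1 : b ∈ pathTo t a := List.Sublist.subset (List.dropLast_sublist _) hbm
    exact E1 b (pathTo_subset _ h1) (fun he => hpnotpath a hamem hap (he ▸ h1))
      (fun he => hqpa (he ▸ h1))
end

section
/- Let c be a generic linear list, f its piecewise linear map, and s ≤ t real numbers such that no item value c_i lies in the half-open interval (s, t]. Then the map sending each connected component of f^{-1}((−∞, s]) to the connected component of f^{-1}((−∞, t]) containing it is a bijection onto the set of connected components of f^{-1}((−∞, t]). -/
/-!
On each piece `[n, n + 1]` the map is affine, so on a subinterval of a piece it is bounded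
by its values at the two ends. Hence a segment between two points of `f⁻¹(-∞, s]` that stays
inside `f⁻¹(-∞, t]` can only exceed `s` between consecutive items of value `≤ t`; as no item
value lies in `(s, t]`, those items have value `≤ s`, so the segment stays in `f⁻¹(-∞, s]` and
no two components merge. Conversely, from any point of `f⁻¹(-∞, t]` one can descend along its
piece to an item, whose value is then `≤ s`; so every component at level `t` is reached.
-/

open Set

theorem mem_connectedComponentIn_of_Icc_subset {α : Type*} [ConditionallyCompleteLinearOrder α]
    [TopologicalSpace α] [OrderTopology α] [DenselyOrdered α] {S T : Set α} (hST : S ⊆ T)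
    (hS : ∀ a ∈ S, ∀ b ∈ S, Icc a b ⊆ T → Icc a b ⊆ S) {x y : α} (hx : x ∈ S) (hy : y ∈ S)
    (h : y ∈ connectedComponentIn T x) : y ∈ connectedComponentIn S x := by
  have hT : uIcc x y ⊆ T :=
    ((isPreconnected_iff_ordConnected.1 isPreconnected_connectedComponentIn).uIcc_subset
      (mem_connectedComponentIn (hST hx)) h).trans (connectedComponentIn_subset _ _)
  have hmin : x ⊓ y ∈ S := by rcases min_choice x y with e | e <;> rw [e] <;> assumption
  have hmax : x ⊔ y ∈ S := by rcases max_choice x y with e | e <;> rw [e] <;> assumption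
  exact isPreconnected_uIcc.subset_connectedComponentIn left_mem_uIcc
    (hS _ hmin _ hmax hT) right_mem_uIcc

section PLMap

variable {c : ℕ → ℝ}

theorem plMap_eq_of_mem_Icc {n : ℕ} {x : ℝ} (hx : x ∈ Icc (n : ℝ) (n + 1)) :
    plMap c x = c n + (x - n) * (c (n + 1) - c n) := by
  rcases hx.2.lt_or_eq with hlt | rfl
  · have hfl : ⌊x⌋ = n := Int.floor_eq_iff.2 ⟨mod_cast hx.1, mod_cast hlt⟩
    simp [plMap, hfl]
  · have hfl : ⌊(n : ℝ) + 1⌋ = (n : ℤ) + 1 := by exact_mod_cast Int.floor_natCast (n + 1)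
    simp only [plMap, hfl, Int.toNat_natCast_add_one]
    push_cast
    ring

@[simp]
theorem plMap_natCast (n : ℕ) : plMap c n = c n := by
  simpa using plMap_eq_of_mem_Icc (c := c) (n := n) (x := n) ⟨le_rfl, by linarith⟩

theorem plMap_le_max {n : ℕ} {u v z : ℝ} (hu : (n : ℝ) ≤ u) (hv : v ≤ n + 1)
    (hz : z ∈ Icc u v) : plMap c z ≤ max (plMap c u) (plMap c v) := by
  have hI : ∀ w ∈ Icc u v, w ∈ Icc (n : ℝ) (n + 1) := fun w hw =>
    ⟨hu.trans hw.1, hw.2.trans hv⟩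
  rw [plMap_eq_of_mem_Icc (hI z hz), plMap_eq_of_mem_Icc (hI u (left_mem_Icc.2 (hz.1.trans hz.2))),
    plMap_eq_of_mem_Icc (hI v (right_mem_Icc.2 (hz.1.trans hz.2)))]
  rcases le_total (c n) (c (n + 1)) with hd | hd
  · exact le_max_of_le_right (by nlinarith [hz.2])
  · exact le_max_of_le_left (by nlinarith [hz.1])

theorem exists_item_plMap_le_on_uIcc {n : ℕ} {y : ℝ} (hy : y ∈ Icc (n : ℝ) (n + 1)) :
    ∃ k, (k = n ∨ k = n + 1) ∧ ∀ z ∈ uIcc (k : ℝ) y, plMap c z ≤ plMap c y := by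
  have hfy := plMap_eq_of_mem_Icc (c := c) hy
  rcases le_total (c n) (c (n + 1)) with hd | hd
  · refine ⟨n, Or.inl rfl, fun z hz => ?_⟩
    rw [uIcc_of_le hy.1] at hz
    refine (plMap_le_max le_rfl hy.2 hz).trans (max_le ?_ le_rfl)
    rw [plMap_natCast, hfy]
    nlinarith [hy.1]
  · refine ⟨n + 1, Or.inr rfl, fun z hz => ?_⟩
    rw [uIcc_of_ge (by push_cast; exact hy.2)] at hz
    refine (plMap_le_max hy.1 (by push_cast; rfl) hz).trans (max_le le_rfl ?_)
    rw [plMap_natCast, hfy]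
    nlinarith [hy.2]

end PLMap

theorem exists_piece_mem_Icc {m : ℕ} (hm : 2 ≤ m) {y : ℝ} (hy : y ∈ Icc (1 : ℝ) m) :
    ∃ n : ℕ, 1 ≤ n ∧ n + 1 ≤ m ∧ y ∈ Icc (n : ℝ) (n + 1) := by
  have hy0 : 0 ≤ y := zero_le_one.trans hy.1
  have hfl : 1 ≤ ⌊y⌋₊ := Nat.le_floor (by exact_mod_cast hy.1)
  by_cases hlt : ⌊y⌋₊ + 1 ≤ m
  · exact ⟨⌊y⌋₊, hfl, hlt, Nat.floor_le hy0, (Nat.lt_floor_add_one y).le⟩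
  · have hym : y = m := le_antisymm hy.2 (by
      calc (m : ℝ) ≤ ⌊y⌋₊ := by exact_mod_cast (by omega : m ≤ ⌊y⌋₊)
        _ ≤ y := Nat.floor_le hy0)
    refine ⟨m - 1, by omega, by omega, ?_⟩
    rw [hym, Nat.cast_sub (by omega)]
    constructor <;> push_cast <;> linarith

section Sublevel

variable {m : ℕ} {c : ℕ → ℝ} {s t : ℝ}

theorem sublevel_mono (hst : s ≤ t) : sublevel m c s ⊆ sublevel m c t :=
  fun _ hx => ⟨hx.1, hx.2.trans hst⟩

theorem natCast_mem_sublevel_of_gap (hgap : ∀ i, 1 ≤ i → i ≤ m → c i ∉ Ioc s t) {n : ℕ}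
    (hn : (n : ℝ) ∈ sublevel m c t) : (n : ℝ) ∈ sublevel m c s := by
  obtain ⟨⟨h1, hm⟩, ht⟩ := hn
  rw [plMap_natCast] at ht
  refine ⟨⟨h1, hm⟩, ?_⟩
  rw [plMap_natCast]
  by_contra hs
  exact hgap n (by exact_mod_cast h1) (by exact_mod_cast hm) ⟨not_le.1 hs, ht⟩

theorem Icc_subset_sublevel_of_gap (hm : 2 ≤ m) (hgap : ∀ i, 1 ≤ i → i ≤ m → c i ∉ Ioc s t)
    {x y : ℝ} (hx : x ∈ sublevel m c s) (hy : y ∈ sublevel m c s)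
    (hxy : Icc x y ⊆ sublevel m c t) : Icc x y ⊆ sublevel m c s := by
  intro z hz
  obtain ⟨n, -, -, hzn⟩ := exists_piece_mem_Icc hm (hxy hz).1
  have hu : plMap c (max x n) ≤ s := by
    rcases le_total x n with h | h
    · rw [max_eq_right h]
      exact (natCast_mem_sublevel_of_gap hgap (hxy ⟨h, hzn.1.trans hz.2⟩)).2
    · rw [max_eq_left h]
      exact hx.2
  have hv : plMap c (min y (n + 1)) ≤ s := by
    rcases le_total y (n + 1) with h | h
    · rw [min_eq_left h]
      exact hy.2
    · rw [min_eq_right h]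
      exact_mod_cast (natCast_mem_sublevel_of_gap (n := n + 1) hgap
        (by exact_mod_cast hxy ⟨hz.1.trans hzn.2, h⟩)).2
  exact ⟨(hxy hz).1, (plMap_le_max (le_max_right _ _) (min_le_right _ _)
    ⟨max_le hz.1 hzn.1, le_min hz.2 hzn.2⟩).trans (max_le hu hv)⟩

theorem exists_mem_sublevel_mem_connectedComponentIn (hm : 2 ≤ m)
    (hgap : ∀ i, 1 ≤ i → i ≤ m → c i ∉ Ioc s t) {y : ℝ} (hy : y ∈ sublevel m c t) :
    ∃ x ∈ sublevel m c s, x ∈ connectedComponentIn (sublevel m c t) y := by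
  obtain ⟨n, hn1, hnm, hyn⟩ := exists_piece_mem_Icc hm hy.1
  obtain ⟨k, hk, hdesc⟩ := exists_item_plMap_le_on_uIcc (c := c) hyn
  have hpiece : uIcc (k : ℝ) y ⊆ Icc (1 : ℝ) m := by
    refine uIcc_subset_Icc ?_ (Icc_subset_Icc (by exact_mod_cast hn1) ?_ hyn)
    · rcases hk with e | e <;> subst k
      · exact ⟨by exact_mod_cast hn1, by exact_mod_cast (by omega : n ≤ m)⟩
      · exact ⟨by exact_mod_cast (by omega : 1 ≤ n + 1), by exact_mod_cast hnm⟩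
    · exact_mod_cast hnm
  have hseg : uIcc (k : ℝ) y ⊆ sublevel m c t := fun z hz => ⟨hpiece hz, (hdesc z hz).trans hy.2⟩
  have hk_mem : (k : ℝ) ∈ connectedComponentIn (sublevel m c t) y :=
    isPreconnected_uIcc.subset_connectedComponentIn right_mem_uIcc hseg left_mem_uIcc
  exact ⟨k, natCast_mem_sublevel_of_gap hgap (hseg left_mem_uIcc), hk_mem⟩

end Sublevel

theorem statement12_general (m : ℕ) (hm : 2 ≤ m) (c : ℕ → ℝ)
    (s t : ℝ) (hst : s ≤ t)
    (hgap : ∀ i, 1 ≤ i → i ≤ m → c i ∉ Set.Ioc s t) :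
    (∀ x ∈ sublevel m c s,
      connectedComponentIn (sublevel m c s) x ⊆ connectedComponentIn (sublevel m c t) x) ∧
    (∀ x ∈ sublevel m c s, ∀ y ∈ sublevel m c s,
      (connectedComponentIn (sublevel m c t) x = connectedComponentIn (sublevel m c t) y ↔
        connectedComponentIn (sublevel m c s) x = connectedComponentIn (sublevel m c s) y)) ∧
    (∀ y ∈ sublevel m c t, ∃ x ∈ sublevel m c s,
      connectedComponentIn (sublevel m c t) y = connectedComponentIn (sublevel m c t) x) := by
  have hmono := sublevel_mono (m := m) (c := c) hst
  refine ⟨fun x _ => connectedComponentIn_mono x hmono, fun x hx y hy => ⟨fun h => ?_, fun h => ?_⟩,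
    fun y hy => ?_⟩
  · refine connectedComponentIn_eq (mem_connectedComponentIn_of_Icc_subset hmono
      (fun a ha b hb => Icc_subset_sublevel_of_gap hm hgap ha hb) hx hy ?_)
    exact h ▸ mem_connectedComponentIn (hmono hy)
  · exact connectedComponentIn_eq
      (connectedComponentIn_mono x hmono (h ▸ mem_connectedComponentIn hy))
  · obtain ⟨x, hx, hxy⟩ := exists_mem_sublevel_mem_connectedComponentIn hm hgap hy
    exact ⟨x, hx, connectedComponentIn_eq hxy⟩

/-- If no item value lies in `(s, t]`, then sending each connected
component of the sublevel set at `s` to the component of the sublevel set at `t`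
containing it is a bijection onto the components of the sublevel set at `t`. -/
theorem statement12 (m : ℕ) (hm : 2 ≤ m) (c : ℕ → ℝ)
    (hgen : Set.InjOn c (Set.Icc 1 m))
    (s t : ℝ) (hst : s ≤ t)
    (hgap : ∀ i, 1 ≤ i → i ≤ m → c i ∉ Set.Ioc s t) :
    (∀ x ∈ sublevel m c s,
      connectedComponentIn (sublevel m c s) x ⊆ connectedComponentIn (sublevel m c t) x) ∧
    (∀ x ∈ sublevel m c s, ∀ y ∈ sublevel m c s,
      (connectedComponentIn (sublevel m c t) x = connectedComponentIn (sublevel m c t) y ↔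
        connectedComponentIn (sublevel m c s) x = connectedComponentIn (sublevel m c s) y)) ∧
    (∀ y ∈ sublevel m c t, ∃ x ∈ sublevel m c s,
      connectedComponentIn (sublevel m c t) y = connectedComponentIn (sublevel m c t) x) :=
  statement12_general m hm c s t hst hgap
end
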